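/- arXiv:1410.7856 — 10 statements merged into one kernel-verified Lean document; each statement's English description precedes it below -/
import Mathlib

section
/- In the Mallows model with dispersion φ ∈ (0,1), for any ground-truth linear order W and any profile P of linear orders, Pr(P|W) is proportional (with a constant independent of W) to the product over all ordered pairs (c,b) with c ≻_W b of φ^(−w_P(c,b)/2), where w_P(c,b) is the number of votes in P ranking c above b minus the number ranking b above c. -/
open Finset

/-- `a` is preferred to `b` in the linear order `V` (positions: 0 = top). -/
def prefers {m : ℕ} (V : Equiv.Perm (Fin m)) (a b : Fin m) : Prop :=
  V.symm a < V.symm b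

instance {m : ℕ} (V : Equiv.Perm (Fin m)) (a b : Fin m) : Decidable (prefers V a b) :=
  inferInstanceAs (Decidable (_ < _))

/-- Kendall-tau distance between two linear orders. -/
def kendall {m : ℕ} (V W : Equiv.Perm (Fin m)) : ℕ :=
  (Finset.univ.filter (fun p : Fin m × Fin m =>
    p.1 < p.2 ∧ ¬ (prefers V p.1 p.2 ↔ prefers W p.1 p.2))).card

/-- Total Kendall-tau distance between a profile and a linear order. -/
def kendallP {m : ℕ} (P : Multiset (Equiv.Perm (Fin m))) (W : Equiv.Perm (Fin m)) : ℕ :=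
  (P.map (fun V => kendall V W)).sum

/-- Weighted-majority-graph weight `w_P(a,b)`. -/
def wP {m : ℕ} (P : Multiset (Equiv.Perm (Fin m))) (a b : Fin m) : ℤ :=
  ((P.filter (fun V => prefers V a b)).card : ℤ)
    - ((P.filter (fun V => prefers V b a)).card : ℤ)


/-!
The Kendall distance `kendall V W` counts the pairs `c ≻_W b` that `V` reverses, so the exponent
`∑_{V ∈ P} kendall V W` splits over the pairs `c ≻_W b` into the number of votes ranking `b`
above `c`, which is `(n - w_P(c,b)) / 2`. The normalization `Z` and the number of pairs
`c ≻_W b` do not depend on `W`, because relabelling the alternatives by `W⁻¹` turns `W` into the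
identity.
-/

lemma Multiset.prod_map_pow_eq_pow_sum {α M : Type*} [CommMonoid M] (P : Multiset α) (x : M)
    (f : α → ℕ) :
    (P.map fun a => x ^ f a).prod = x ^ (P.map f).sum := by
  induction P using Multiset.induction with
  | empty => simp
  | cons a P ih => simp [ih, pow_add]

lemma prefers_asymm {m : ℕ} (V : Equiv.Perm (Fin m)) {a b : Fin m} (h : prefers V a b) :
    ¬ prefers V b a :=
  lt_asymm h

lemma ne_of_prefers {m : ℕ} {V : Equiv.Perm (Fin m)} {a b : Fin m} (h : prefers V a b) :
    a ≠ b := by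
  rintro rfl
  exact lt_irrefl _ h

lemma prefers_or_prefers {m : ℕ} (V : Equiv.Perm (Fin m)) {a b : Fin m} (h : a ≠ b) :
    prefers V a b ∨ prefers V b a :=
  lt_or_gt_of_ne (V.symm.injective.ne h)

lemma not_prefers {m : ℕ} (V : Equiv.Perm (Fin m)) {a b : Fin m} (h : a ≠ b) :
    ¬ prefers V a b ↔ prefers V b a :=
  ⟨fun h' => (prefers_or_prefers V h).resolve_left h', prefers_asymm V⟩

lemma prefers_mul_apply {m : ℕ} (σ V : Equiv.Perm (Fin m)) (a b : Fin m) :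
    prefers (σ * V) (σ a) (σ b) ↔ prefers V a b := by
  simp [prefers, Equiv.Perm.mul_def]

lemma card_filter_lt_and_or_swap {α : Type*} [Fintype α] [LinearOrder α]
    (Q : α → α → Prop) [DecidableRel Q] (hQ : ∀ a b, Q a b → ¬ Q b a) :
    #{p : α × α | p.1 < p.2 ∧ (Q p.1 p.2 ∨ Q p.2 p.1)} = #{p : α × α | Q p.1 p.2} := by
  have hswap :
      #{p : α × α | p.2 < p.1 ∧ Q p.1 p.2} = #{p : α × α | p.1 < p.2 ∧ Q p.2 p.1} :=
    card_equiv (Equiv.prodComm α α) (by simp)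
  have hsplit : #{p : α × α | Q p.1 p.2}
      = #{p : α × α | p.1 < p.2 ∧ Q p.1 p.2} + #{p : α × α | p.2 < p.1 ∧ Q p.1 p.2} := by
    rw [← card_union_of_disjoint]
    · congr 1; ext p
      have := hQ p.1 p.1
      rcases lt_trichotomy p.1 p.2 with h | h | h <;> simp_all [h.not_gt]
    · rw [disjoint_filter]; exact fun p _ h1 h2 => lt_asymm h1.1 h2.1
  rw [hsplit, hswap, ← card_union_of_disjoint]
  · congr 1; ext p; simp [and_or_left]
  · rw [disjoint_filter]; exact fun p _ h1 h2 => hQ _ _ h1.2 h2.2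

lemma kendall_eq_card_inversions {m : ℕ} (V W : Equiv.Perm (Fin m)) :
    kendall V W = #{p : Fin m × Fin m | prefers W p.1 p.2 ∧ prefers V p.2 p.1} := by
  rw [kendall, ← card_filter_lt_and_or_swap (fun a b => prefers W a b ∧ prefers V b a)
    fun a b h h' => prefers_asymm W h.1 h'.1]
  congr 1; ext p
  simp only [mem_filter, mem_univ, true_and, and_congr_right_iff]
  intro hlt
  rcases prefers_or_prefers V hlt.ne with hV | hV <;>
  rcases prefers_or_prefers W hlt.ne with hW | hW <;>
  simp [hV, hW, prefers_asymm V hV, prefers_asymm W hW]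

lemma kendall_mul_left {m : ℕ} (σ V W : Equiv.Perm (Fin m)) :
    kendall (σ * V) (σ * W) = kendall V W := by
  rw [kendall_eq_card_inversions, kendall_eq_card_inversions]
  exact (card_equiv (σ.prodCongr σ) (by simp [prefers_mul_apply])).symm

lemma sum_kendall_eq_sum_kendall_one {m : ℕ} {M : Type*} [AddCommMonoid M] (f : ℕ → M)
    (W : Equiv.Perm (Fin m)) :
    ∑ V : Equiv.Perm (Fin m), f (kendall V W) = ∑ V : Equiv.Perm (Fin m), f (kendall V 1) :=
  Fintype.sum_equiv (Equiv.mulLeft W⁻¹) _ _ fun V => by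
    simp [← kendall_mul_left W⁻¹ V W]

lemma card_filter_prefers_eq_card_filter_lt {m : ℕ} (W : Equiv.Perm (Fin m)) :
    #{p : Fin m × Fin m | prefers W p.1 p.2} = #{p : Fin m × Fin m | p.1 < p.2} :=
  card_equiv (W.symm.prodCongr W.symm) fun _ => by simp only [mem_filter, mem_univ, true_and]; rfl

lemma sum_kendall_eq_sum_card_filter {m : ℕ} (P : Multiset (Equiv.Perm (Fin m)))
    (W : Equiv.Perm (Fin m)) :
    (P.map fun V => kendall V W).sum
      = ∑ p : Fin m × Fin m with prefers W p.1 p.2,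
          (P.filter fun V => prefers V p.2 p.1).card := by
  induction P using Multiset.induction with
  | empty => simp
  | cons V P ih =>
    rw [Multiset.map_cons, Multiset.sum_cons, ih, kendall_eq_card_inversions, ← filter_filter,
      card_filter, ← sum_add_distrib]
    refine sum_congr rfl fun p _ => ?_
    rw [Multiset.filter_cons]
    split_ifs <;> simp [add_comm]

lemma card_filter_prefers_eq {m : ℕ} (P : Multiset (Equiv.Perm (Fin m))) {a b : Fin m}
    (hab : a ≠ b) :
    ((P.filter fun V => prefers V b a).card : ℝ) = (Multiset.card P - wP P a b) / 2 := by
  have hcard : (P.filter fun V => prefers V a b).card + (P.filter fun V => prefers V b a).card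
      = Multiset.card P := by
    rw [← Multiset.card_add, Multiset.filter_congr fun V _ => (not_prefers V hab).symm,
      Multiset.filter_add_not]
  rw [wP]; push_cast; rw [← hcard]; push_cast; ring

theorem mallows_likelihood_wmg_general {m : ℕ} (φ : ℝ) (hφ0 : 0 < φ)
    (P : Multiset (Equiv.Perm (Fin m))) :
    ∃ K : ℝ, 0 < K ∧ ∀ W : Equiv.Perm (Fin m),
      (P.map (fun V => φ ^ kendall V W /
          ∑ V' : Equiv.Perm (Fin m), φ ^ kendall V' W)).prod
        = K * ∏ p ∈ Finset.univ.filter (fun p : Fin m × Fin m => prefers W p.1 p.2),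
            φ ^ (-(wP P p.1 p.2 : ℝ) / 2) := by
  set Z := ∑ V : Equiv.Perm (Fin m), φ ^ kendall V 1
  have hZ : 0 < Z := sum_pos (fun _ _ => pow_pos hφ0 _) univ_nonempty
  refine ⟨(φ ^ ((Multiset.card P : ℝ) / 2)) ^ #{p : Fin m × Fin m | p.1 < p.2}
      / Z ^ Multiset.card P, by positivity, fun W => ?_⟩
  have hpair : ∀ p ∈ univ.filter (fun p : Fin m × Fin m => prefers W p.1 p.2),
      φ ^ (P.filter fun V => prefers V p.2 p.1).card
        = φ ^ ((Multiset.card P : ℝ) / 2) * φ ^ (-(wP P p.1 p.2 : ℝ) / 2) := fun p hp => by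
    rw [← Real.rpow_natCast, card_filter_prefers_eq P (ne_of_prefers (mem_filter.1 hp).2),
      ← Real.rpow_add hφ0]
    congr 1
    ring
  rw [sum_kendall_eq_sum_kendall_one (φ ^ ·) W, Multiset.prod_map_div,
    Multiset.prod_map_pow_eq_pow_sum, sum_kendall_eq_sum_card_filter, ← prod_pow_eq_pow_sum,
    prod_congr rfl hpair, prod_mul_distrib, prod_const, card_filter_prefers_eq_card_filter_lt,
    Multiset.map_const', Multiset.prod_replicate]
  ring

/-- the Mallows likelihood of a profile is proportional (with constant
independent of the ground truth `W`) to `∏_{c ≻_W b} φ^(−w_P(c,b)/2)`. -/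
theorem mallows_likelihood_wmg {m : ℕ} (φ : ℝ) (hφ0 : 0 < φ) (hφ1 : φ < 1)
    (P : Multiset (Equiv.Perm (Fin m))) :
    ∃ K : ℝ, 0 < K ∧ ∀ W : Equiv.Perm (Fin m),
      (P.map (fun V => φ ^ kendall V W /
          ∑ V' : Equiv.Perm (Fin m), φ ^ kendall V' W)).prod
        = K * ∏ p ∈ Finset.univ.filter (fun p : Fin m × Fin m => prefers W p.1 p.2),
            φ ^ (-(wP P p.1 p.2 : ℝ) / 2) :=
  mallows_likelihood_wmg_general φ hφ0 P
end

section
/- Let W be a linear order over C and let P' be obtained from a profile P by raising the position of an alternative c in exactly one vote by one position (swapping c with the alternative directly above it). If c is ranked at the top of W, then Kendall(P',W) = Kendall(P,W) − 1, where Kendall of a profile is the sum of Kendall distances of its votes. -/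
open Finset

lemma mul_swap_symm_apply' {m : ℕ} (U : Equiv.Perm (Fin m)) (i j a : Fin m) :
    (U * Equiv.swap i j).symm a = Equiv.swap i j (U.symm a) := by
  simp [Equiv.Perm.mul_def, Equiv.symm_trans_apply]

lemma swap_val_lt {m : ℕ} (i j : Fin m) (hadj : (j : ℕ) + 1 = (i : ℕ)) (k l : Fin m)
    (h1 : ¬(k = i ∧ l = j)) (h2 : ¬(k = j ∧ l = i)) :
    ((Equiv.swap i j k : ℕ) < (Equiv.swap i j l : ℕ) ↔ (k : ℕ) < (l : ℕ)) := by
  simp only [Equiv.swap_apply_def]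
  simp only [Fin.ext_iff] at h1 h2 ⊢
  split_ifs <;> omega

lemma kendall_swap_top {m : ℕ} (U W : Equiv.Perm (Fin m)) (c : Fin m)
    (htop : (W.symm c : ℕ) = 0) (i j : Fin m) (hi : U i = c)
    (hadj : (j : ℕ) + 1 = (i : ℕ)) :
    kendall (U * Equiv.swap i j) W + 1 = kendall U W := by
  set U' := U * Equiv.swap i j with hU'
  have hij : i ≠ j := by
    intro h; rw [h] at hadj; omega
  set d := U j with hd
  have hic : U.symm c = i := by rw [← hi]; simp
  have hjd : U.symm d = j := by simp [hd]
  have hcd : c ≠ d := by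
    intro h
    apply hij
    rw [← hic, h, hjd]
  have hU's : ∀ a, U'.symm a = Equiv.swap i j (U.symm a) :=
    fun a => mul_swap_symm_apply' U i j a
  have hU'c : U'.symm c = j := by rw [hU's, hic, Equiv.swap_apply_left]
  have hU'd : U'.symm d = i := by rw [hU's, hjd, Equiv.swap_apply_right]
  have hWcd : prefers W c d := by
    have h1 : W.symm d ≠ W.symm c := fun h => hcd (W.symm.injective h).symm
    have h2 : (W.symm d : ℕ) ≠ (W.symm c : ℕ) := fun h => h1 (Fin.ext h)
    unfold prefers; rw [Fin.lt_def]; omega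
  have hWdc : ¬ prefers W d c := by
    unfold prefers at hWcd ⊢; rw [Fin.lt_def] at hWcd ⊢; omega
  have hUcd : ¬ prefers U c d := by
    unfold prefers; rw [Fin.lt_def, hic, hjd]; omega
  have hUdc : prefers U d c := by
    unfold prefers; rw [Fin.lt_def, hic, hjd]; omega
  have hU'cd : prefers U' c d := by
    unfold prefers; rw [Fin.lt_def, hU'c, hU'd]; omega
  have hU'dc : ¬ prefers U' d c := by
    unfold prefers; rw [Fin.lt_def, hU'c, hU'd]; omega
  have key : ∀ a b : Fin m, ¬(a = c ∧ b = d) → ¬(a = d ∧ b = c) →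
      (prefers U' a b ↔ prefers U a b) := by
    intro a b h1 h2
    unfold prefers
    rw [hU's, hU's, Fin.lt_def, Fin.lt_def]
    apply swap_val_lt i j hadj
    · rintro ⟨ha, hb⟩
      exact h1 ⟨by rw [← hic] at ha; exact U.symm.injective ha,
        by rw [← hjd] at hb; exact U.symm.injective hb⟩
    · rintro ⟨ha, hb⟩
      exact h2 ⟨by rw [← hjd] at ha; exact U.symm.injective ha,
        by rw [← hic] at hb; exact U.symm.injective hb⟩
  -- the exceptional ordered pair
  set q : Fin m × Fin m := if c < d then (c, d) else (d, c) with hq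
  have hqS : q.1 < q.2 := by
    rcases lt_or_gt_of_ne hcd with h | h
    · simp [hq, h]
    · simp [hq, not_lt_of_gt h, h]
  have hqU : ¬ (prefers U q.1 q.2 ↔ prefers W q.1 q.2) := by
    rcases lt_or_gt_of_ne hcd with h | h
    · simp only [hq, if_pos h]; tauto
    · simp only [hq, if_neg (not_lt_of_gt h)]; tauto
  have hqU' : (prefers U' q.1 q.2 ↔ prefers W q.1 q.2) := by
    rcases lt_or_gt_of_ne hcd with h | h
    · simp only [hq, if_pos h]; tauto
    · simp only [hq, if_neg (not_lt_of_gt h)]; tauto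
  have hset : (Finset.univ.filter (fun p : Fin m × Fin m =>
      p.1 < p.2 ∧ ¬ (prefers U p.1 p.2 ↔ prefers W p.1 p.2)))
      = insert q (Finset.univ.filter (fun p : Fin m × Fin m =>
      p.1 < p.2 ∧ ¬ (prefers U' p.1 p.2 ↔ prefers W p.1 p.2))) := by
    ext ⟨a, b⟩
    simp only [Finset.mem_filter, Finset.mem_insert, Finset.mem_univ, true_and]
    by_cases hcase : (a = c ∧ b = d) ∨ (a = d ∧ b = c)
    · constructor
      · intro h
        left
        rcases hcase with ⟨rfl, rfl⟩ | ⟨rfl, rfl⟩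
        · rcases lt_or_gt_of_ne hcd with hlt | hlt
          · simp [hq, hlt]
          · exact absurd h.1 (not_lt_of_gt hlt)
        · rcases lt_or_gt_of_ne hcd with hlt | hlt
          · exact absurd h.1 (not_lt_of_gt hlt)
          · simp [hq, not_lt_of_gt hlt]
      · intro h
        rcases h with h | h
        · have : a = q.1 ∧ b = q.2 := by
            constructor
            · exact congrArg Prod.fst h
            · exact congrArg Prod.snd h
          rcases this with ⟨rfl, rfl⟩
          exact ⟨hqS, hqU⟩
        · rcases hcase with ⟨rfl, rfl⟩ | ⟨rfl, rfl⟩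
          · exact absurd (h.2) (by rw [not_not]; constructor <;> intro <;> tauto)
          · exact absurd (h.2) (by rw [not_not]; constructor <;> intro <;> tauto)
    · have hk := key a b (fun hh => hcase (Or.inl hh)) (fun hh => hcase (Or.inr hh))
      constructor
      · intro h
        right
        exact ⟨h.1, by rw [hk]; exact h.2⟩
      · intro h
        rcases h with h | h
        · exfalso
          rcases lt_or_gt_of_ne hcd with hlt | hlt
          · rw [hq, if_pos hlt] at h
            simp only [Prod.mk.injEq] at h
            exact hcase (Or.inl h)
          · rw [hq, if_neg (not_lt_of_gt hlt)] at h
            simp only [Prod.mk.injEq] at h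
            exact hcase (Or.inr h)
        · exact ⟨h.1, by rw [← hk]; exact h.2⟩
  have hqnot : q ∉ (Finset.univ.filter (fun p : Fin m × Fin m =>
      p.1 < p.2 ∧ ¬ (prefers U' p.1 p.2 ↔ prefers W p.1 p.2))) := by
    simp only [Finset.mem_filter, Finset.mem_univ, true_and, not_and, not_not]
    intro _
    exact hqU'
  unfold kendall
  rw [hset, Finset.card_insert_of_notMem hqnot]

/-- raising `c` (ranked at the top of `W`) by one position in one vote
decreases the total Kendall-tau distance to `W` by exactly one. -/
theorem kendall_raise_top {m : ℕ} (P : Multiset (Equiv.Perm (Fin m)))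
    (W U : Equiv.Perm (Fin m)) (hU : U ∈ P) (c : Fin m)
    (htop : (W.symm c : ℕ) = 0)
    (i j : Fin m) (hi : U i = c) (hadj : (j : ℕ) + 1 = (i : ℕ)) :
    kendallP ((U * Equiv.swap i j) ::ₘ P.erase U) W + 1 = kendallP P W := by
  have h := kendall_swap_top U W c htop i j hi hadj
  conv_rhs => rw [← Multiset.cons_erase hU]
  simp only [kendallP, Multiset.map_cons, Multiset.sum_cons]
  omega
end

section
/- In the Mallows model with dispersion φ ∈ (0,1), under the uniform prior over linear orders, the Bayesian estimator f_B^1 (selecting the alternatives c maximizing Σ_{V ∈ L_c(C)} Pr(P|V)) is monotone: if c ∈ f_B^1(P) and P' is obtained from P by raising the position of c in one vote, then c ∈ f_B^1(P'). -/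
/-! Let `n` and `n'` be the positions of `c` in `U` and `U'`. As the two votes agree on every pair
not containing `c`, they disagree exactly on the pairs `{x, c}` with `x` above `c` in `U` but not
in `U'`, so `kendall U U' = n - n'`. Disagreement sets compose by symmetric difference, hence
`kendall U V ≤ kendall U' V + (n - n')` for every ground truth `V`, with equality when `V` ranks `c`
first, since `V` and `U'` then agree on those pairs. For `φ ≤ 1` this says that replacing `U` by
`U'` scales the likelihood of every `V` by at most `φ⁻¹ ^ (n - n')`, and by exactly that factor
when `V` ranks `c` first, so no score grows by a larger factor than the score of `c`. -/

open Finset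

/-- Mallows likelihood of a profile `P` given ground truth `V` (with normalization). -/
noncomputable def likelihood {m : ℕ} (φ : ℝ) (P : Multiset (Equiv.Perm (Fin m)))
    (V : Equiv.Perm (Fin m)) : ℝ :=
  (P.map (fun U => φ ^ kendall U V /
      ∑ U' : Equiv.Perm (Fin m), φ ^ kendall U' V)).prod

/-- Score of alternative `c`: total likelihood of the linear orders ranking `c` first.
Under the uniform prior, `f_B^1` selects the alternatives maximizing this score. -/
noncomputable def score {m : ℕ} (φ : ℝ) (P : Multiset (Equiv.Perm (Fin m))) (c : Fin m) : ℝ :=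
  ∑ V ∈ Finset.univ.filter (fun V : Equiv.Perm (Fin m) => (V.symm c : ℕ) = 0),
    likelihood φ P V

open scoped symmDiff

namespace Mallows

variable {m : ℕ}

lemma not_prefers_iff {W : Equiv.Perm (Fin m)} {a b : Fin m} (hab : a ≠ b) :
    ¬ prefers W a b ↔ prefers W b a := by
  simp only [prefers, not_lt]
  exact (W.symm.injective.ne hab.symm).le_iff_lt

lemma ne_of_prefers {W : Equiv.Perm (Fin m)} {a b : Fin m} (h : prefers W a b) : a ≠ b := by
  rintro rfl
  exact lt_irrefl _ h

lemma not_prefers_of_first {V : Equiv.Perm (Fin m)} {c : Fin m} (hV : (V.symm c : ℕ) = 0)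
    (x : Fin m) : ¬ prefers V x c := by
  simp only [prefers, Fin.lt_def]
  omega

lemma disagree_comm (W V : Equiv.Perm (Fin m)) (a b : Fin m) :
    ¬ (prefers W a b ↔ prefers V a b) ↔ ¬ (prefers W b a ↔ prefers V b a) := by
  rcases eq_or_ne a b with rfl | hab
  · rfl
  · simp only [← not_prefers_iff hab, not_iff_not]

def disagreements (W V : Equiv.Perm (Fin m)) : Finset (Fin m × Fin m) :=
  univ.filter fun p => p.1 < p.2 ∧ ¬ (prefers W p.1 p.2 ↔ prefers V p.1 p.2)

lemma mem_disagreements {W V : Equiv.Perm (Fin m)} {p : Fin m × Fin m} :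
    p ∈ disagreements W V ↔ p.1 < p.2 ∧ ¬ (prefers W p.1 p.2 ↔ prefers V p.1 p.2) := by
  simp [disagreements]

lemma kendall_eq_card_disagreements (W V : Equiv.Perm (Fin m)) :
    kendall W V = #(disagreements W V) := rfl

lemma disagreements_eq_symmDiff (U W V : Equiv.Perm (Fin m)) :
    disagreements U V = disagreements U W ∆ disagreements W V := by
  ext p
  simp only [mem_disagreements, mem_symmDiff]
  tauto

lemma kendall_le_add (U W V : Equiv.Perm (Fin m)) :
    kendall U V ≤ kendall U W + kendall W V := by
  simp only [kendall_eq_card_disagreements, disagreements_eq_symmDiff U W V]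
  exact (card_le_card symmDiff_le_sup).trans (card_union_le _ _)

lemma kendall_eq_add_of_disjoint {U W V : Equiv.Perm (Fin m)}
    (h : Disjoint (disagreements U W) (disagreements W V)) :
    kendall U V = kendall U W + kendall W V := by
  simp only [kendall_eq_card_disagreements]
  rw [disagreements_eq_symmDiff U W V, h.symmDiff_eq_sup, sup_eq_union, card_union_of_disjoint h]

lemma minMax_mem_disagreements {W V : Equiv.Perm (Fin m)} {x c : Fin m} :
    (min x c, max x c) ∈ disagreements W V ↔ x ≠ c ∧ ¬ (prefers W x c ↔ prefers V x c) := by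
  rw [mem_disagreements, min_lt_max]
  refine and_congr_right fun _ => ?_
  rcases le_total x c with h | h
  · rw [min_eq_left h, max_eq_right h]
  · rw [min_eq_right h, max_eq_left h, disagree_comm]


lemma minMax_injOn (c : Fin m) : Set.InjOn (fun x => (min x c, max x c)) {x | x ≠ c} := by
  intro x hx y hy h
  simp only [Prod.mk.injEq, Fin.ext_iff, Fin.coe_min, Fin.coe_max] at h
  simp only [Set.mem_ofPred_eq, ne_eq, Fin.ext_iff] at hx hy
  ext
  omega

def above (W : Equiv.Perm (Fin m)) (c : Fin m) : Finset (Fin m) :=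
  univ.filter fun x => prefers W x c

lemma mem_above {W : Equiv.Perm (Fin m)} {x c : Fin m} : x ∈ above W c ↔ prefers W x c := by
  simp [above]

lemma card_above (W : Equiv.Perm (Fin m)) (c : Fin m) : #(above W c) = W.symm c := by
  have : above W c = (Iio (W.symm c)).map W.toEmbedding := by
    ext x
    simp [mem_above, prefers]
  rw [this, card_map, Fin.card_Iio]

lemma disagreements_eq_image {W W' : Equiv.Perm (Fin m)} {c : Fin m}
    (h : ∀ a b : Fin m, a ≠ c → b ≠ c → (prefers W' a b ↔ prefers W a b)) :
    disagreements W W' = (univ.filter fun x => x ≠ c ∧ ¬ (prefers W x c ↔ prefers W' x c)).image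
      fun x => (min x c, max x c) := by
  ext ⟨a, b⟩
  simp only [mem_image, mem_filter, mem_univ, true_and, ← minMax_mem_disagreements]
  constructor
  · intro hp
    obtain ⟨hlt, hdis⟩ := mem_disagreements.1 hp
    have hc : a = c ∨ b = c := by
      by_contra! hne
      exact hdis (h a b hne.1 hne.2).symm
    rcases hc with rfl | rfl
    · exact ⟨b, by rw [min_eq_right hlt.le, max_eq_left hlt.le]; exact ⟨hp, rfl⟩⟩
    · exact ⟨a, by rw [min_eq_left hlt.le, max_eq_right hlt.le]; exact ⟨hp, rfl⟩⟩
  · rintro ⟨x, hx, hxp⟩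
    exact hxp ▸ hx

section Raise

def IsRaise (c : Fin m) (U U' : Equiv.Perm (Fin m)) : Prop :=
  U'.symm c < U.symm c ∧ ∀ a b : Fin m, a ≠ c → b ≠ c → (prefers U' a b ↔ prefers U a b)

variable {c : Fin m} {U U' : Equiv.Perm (Fin m)}

lemma above_subset_above_of_raise (h : IsRaise c U U') : above U' c ⊆ above U c := by
  intro x hx'
  by_contra hx
  have hxc : x ≠ c := ne_of_prefers (mem_above.1 hx')
  have hsub : above U c ⊆ above U' c := fun y hy => by
    have hyx : prefers U y x := lt_of_lt_of_le (mem_above.1 hy) (not_lt.1 (mt mem_above.2 hx))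
    exact mem_above.2 (lt_trans ((h.2 y x (ne_of_prefers (mem_above.1 hy)) hxc).2 hyx)
      (mem_above.1 hx'))
  have := card_le_card hsub
  rw [card_above, card_above] at this
  exact absurd h.1 (not_lt.2 this)

lemma disagreements_eq_image_above_sdiff (h : IsRaise c U U') :
    disagreements U U' = (above U c \ above U' c).image fun x => (min x c, max x c) := by
  rw [disagreements_eq_image h.2]
  congr 1
  ext x
  have hsub : prefers U' x c → prefers U x c := fun hx =>
    mem_above.1 (above_subset_above_of_raise h (mem_above.2 hx))
  have hxc : prefers U x c → x ≠ c := ne_of_prefers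
  simp only [mem_filter, mem_univ, true_and, mem_sdiff, mem_above]
  tauto

lemma kendall_add_of_raise (h : IsRaise c U U') :
    kendall U U' + U'.symm c = U.symm c := by
  rw [kendall_eq_card_disagreements, disagreements_eq_image_above_sdiff h,
    card_image_of_injOn, card_sdiff_of_subset (above_subset_above_of_raise h),
    card_above, card_above, Nat.sub_add_cancel h.1.le]
  exact (minMax_injOn c).mono fun x hx => ne_of_prefers (mem_above.1 (mem_sdiff.1 hx).1)

lemma disjoint_disagreements_of_raise (h : IsRaise c U U')
    {V : Equiv.Perm (Fin m)} (hV : (V.symm c : ℕ) = 0) :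
    Disjoint (disagreements U U') (disagreements U' V) := by
  rw [disagreements_eq_image_above_sdiff h, disjoint_left]
  rintro _ hp
  obtain ⟨x, hx, rfl⟩ := mem_image.1 hp
  rw [minMax_mem_disagreements, mem_sdiff, mem_above, mem_above] at *
  exact fun ⟨_, hdis⟩ => hdis (iff_of_false hx.2 (not_prefers_of_first hV x))

lemma kendall_add_le_of_raise (h : IsRaise c U U') (V : Equiv.Perm (Fin m)) :
    kendall U V + U'.symm c ≤ kendall U' V + U.symm c := by
  have := kendall_le_add U U' V
  have := kendall_add_of_raise h
  omega

lemma kendall_add_eq_of_raise (h : IsRaise c U U')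
    {V : Equiv.Perm (Fin m)} (hV : (V.symm c : ℕ) = 0) :
    kendall U V + U'.symm c = kendall U' V + U.symm c := by
  rw [kendall_eq_add_of_disjoint (disjoint_disagreements_of_raise h hV),
    ← kendall_add_of_raise h]
  ring

end Raise

section Score

variable {φ : ℝ} {Q : Multiset (Equiv.Perm (Fin m))}

lemma likelihood_nonneg (hφ : 0 ≤ φ) (V : Equiv.Perm (Fin m)) : 0 ≤ likelihood φ Q V :=
  Multiset.prod_nonneg fun _ hx => by
    obtain ⟨_, _, rfl⟩ := Multiset.mem_map.1 hx
    positivity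

lemma pow_mul_likelihood_cons (n : ℕ) (X V : Equiv.Perm (Fin m)) :
    φ ^ n * likelihood φ (X ::ₘ Q) V
      = φ ^ (kendall X V + n) * (likelihood φ Q V / ∑ W, φ ^ kendall W V) := by
  rw [likelihood, Multiset.map_cons, Multiset.prod_cons, ← likelihood, pow_add]
  ring

lemma pow_mul_score_cons_le (hφ0 : 0 ≤ φ) (hφ1 : φ ≤ 1) {X Y : Equiv.Perm (Fin m)} {k n : ℕ}
    (h : ∀ V, kendall X V + k ≤ kendall Y V + n) (b : Fin m) :
    φ ^ n * score φ (Y ::ₘ Q) b ≤ φ ^ k * score φ (X ::ₘ Q) b := by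
  simp only [score, mul_sum, pow_mul_likelihood_cons]
  refine sum_le_sum fun V _ => mul_le_mul_of_nonneg_right (pow_le_pow_of_le_one hφ0 hφ1 (h V)) ?_
  exact div_nonneg (likelihood_nonneg hφ0 V) (sum_nonneg fun _ _ => pow_nonneg hφ0 _)

lemma pow_mul_score_cons_eq {X Y : Equiv.Perm (Fin m)} {k n : ℕ} {c : Fin m}
    (h : ∀ V : Equiv.Perm (Fin m), (V.symm c : ℕ) = 0 → kendall X V + k = kendall Y V + n) :
    φ ^ n * score φ (Y ::ₘ Q) c = φ ^ k * score φ (X ::ₘ Q) c := by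
  simp only [score, mul_sum, pow_mul_likelihood_cons]
  exact sum_congr rfl fun V hV => by rw [h V (mem_filter.1 hV).2]

end Score

end Mallows

open Mallows

/-- the Bayesian estimator `f_B^1` for the Mallows model under uniform prior
is monotone: if `c` is a winner for `P` and `P'` is obtained from `P` by raising the
position of `c` in one vote (keeping the relative order of the other alternatives),
then `c` is a winner for `P'`. -/
theorem fB1_monotone {m : ℕ} (φ : ℝ) (hφ0 : 0 < φ) (hφ1 : φ < 1)
    (P : Multiset (Equiv.Perm (Fin m))) (c : Fin m)
    (U U' : Equiv.Perm (Fin m)) (hU : U ∈ P)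
    (hraise : U'.symm c < U.symm c)
    (hothers : ∀ a b : Fin m, a ≠ c → b ≠ c → (prefers U' a b ↔ prefers U a b))
    (hopt : ∀ b : Fin m, score φ P b ≤ score φ P c) :
    ∀ b : Fin m, score φ (U' ::ₘ P.erase U) b ≤ score φ (U' ::ₘ P.erase U) c := by
  intro b
  have hR : IsRaise c U U' := ⟨hraise, hothers⟩
  have hb := pow_mul_score_cons_le (Q := P.erase U) hφ0.le hφ1.le
    (kendall_add_le_of_raise hR) b
  have hc := pow_mul_score_cons_eq (φ := φ) (Q := P.erase U)
    fun V hV => kendall_add_eq_of_raise hR hV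
  rw [Multiset.cons_erase hU] at hb hc
  refine le_of_mul_le_mul_left ?_ (pow_pos hφ0 (U.symm c : ℕ))
  calc φ ^ (U.symm c : ℕ) * score φ (U' ::ₘ P.erase U) b
      ≤ φ ^ (U'.symm c : ℕ) * score φ P b := hb
    _ ≤ φ ^ (U'.symm c : ℕ) * score φ P c := by gcongr; exact hopt b
    _ = φ ^ (U.symm c : ℕ) * score φ (U' ::ₘ P.erase U) c := hc.symm
end

section
/- Under the Condorcet model with fixed dispersion φ ∈ (0,1) and uniform prior over the set B(C) of all irreflexive, antisymmetric, total binary relations on C, the posterior probability that alternative c is ranked above all other alternatives equals ∏_{b ≠ c} 1/(1 + φ^{w_P(c,b)}), where w_P(c,b) = P(c ≻ b) − P(b ≻ c). -/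
open Finset

/-- A tournament on `Fin m`: an irreflexive, antisymmetric, total binary relation,
encoded as a `Bool`-valued function. -/
def IsTournament {m : ℕ} (T : Fin m → Fin m → Bool) : Prop :=
  (∀ a, T a a = false) ∧ ∀ a b, a ≠ b → T a b = !T b a

instance {m : ℕ} : DecidablePred (IsTournament (m := m)) := fun T =>
  inferInstanceAs (Decidable ((∀ a, T a a = false) ∧ ∀ a b, a ≠ b → T a b = !T b a))

/-- The finite set `B(C)` of all tournaments on `Fin m`. -/
def tournaments (m : ℕ) : Finset (Fin m → Fin m → Bool) :=
  Finset.univ.filter IsTournament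

/-- Kendall-tau distance (number of pairwise disagreements) between a linear order
and a tournament. -/
def kendallT {m : ℕ} (V : Equiv.Perm (Fin m)) (T : Fin m → Fin m → Bool) : ℕ :=
  (Finset.univ.filter (fun p : Fin m × Fin m =>
    p.1 < p.2 ∧ ¬ (prefers V p.1 p.2 ↔ T p.1 p.2 = true))).card

/-- Condorcet-model likelihood of a profile `P` given ground truth tournament `T`. -/
noncomputable def likeB {m : ℕ} (φ : ℝ) (P : Multiset (Equiv.Perm (Fin m)))
    (T : Fin m → Fin m → Bool) : ℝ :=
  (P.map (fun V => φ ^ kendallT V T /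
      ∑ T' ∈ tournaments m, φ ^ kendallT V T')).prod

/-- Posterior probability of tournament `T` given profile `P` (uniform prior on `B(C)`). -/
noncomputable def postB {m : ℕ} (φ : ℝ) (P : Multiset (Equiv.Perm (Fin m)))
    (T : Fin m → Fin m → Bool) : ℝ :=
  likeB φ P T / ∑ T' ∈ tournaments m, likeB φ P T'

/-! ### Auxiliary machinery -/

namespace CondorcetAux

variable {m : ℕ}

/-- The finset of ordered pairs `(a,b)` with `a < b`. -/
def pairs (m : ℕ) : Finset (Fin m × Fin m) :=
  Finset.univ.filter fun p => p.1 < p.2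

/-- Per-pair weight: `gg φ P p b` is `φ` to the number of voters disagreeing with the
orientation `b` of the pair `p`. -/
noncomputable def gg (φ : ℝ) (P : Multiset (Equiv.Perm (Fin m))) (p : Fin m × Fin m)
    (b : Bool) : ℝ :=
  if b then φ ^ (P.filter (fun V => prefers V p.2 p.1)).card
  else φ ^ (P.filter (fun V => prefers V p.1 p.2)).card

lemma not_prefers_iff {V : Equiv.Perm (Fin m)} {a b : Fin m} (hab : a ≠ b) :
    ¬ prefers V a b ↔ prefers V b a := by
  have h : V.symm a ≠ V.symm b := fun h => hab (V.symm.injective h)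
  unfold prefers
  omega

lemma msum_swap {α β : Type*} (P : Multiset α) (s : Finset β) (f : α → β → ℕ) :
    (P.map fun a => ∑ b ∈ s, f a b).sum = ∑ b ∈ s, (P.map fun a => f a b).sum := by
  induction P using Multiset.induction with
  | empty => simp
  | cons a P ih => simp [ih, Finset.sum_add_distrib]

lemma msum_ind {α : Type*} (P : Multiset α) (q : α → Prop) [DecidablePred q] :
    (P.map fun a => if q a then (1 : ℕ) else 0).sum = (P.filter q).card := by
  induction P using Multiset.induction with
  | empty => simp
  | cons a P ih =>
    by_cases h : q a <;> simp [h, ih, Multiset.filter_cons, Nat.add_comm]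

lemma msum_ind' {α : Type*} (P : Multiset α) (q r : α → Prop) [DecidablePred q]
    [DecidablePred r] (h : ∀ a, q a ↔ r a) :
    (P.map fun a => if q a then (1 : ℕ) else 0).sum = (P.filter r).card := by
  rw [show (fun a => if q a then (1 : ℕ) else 0) = fun a => if r a then 1 else 0
    from funext fun a => by simp [h a], msum_ind]

lemma pow_msum {α : Type*} (φ : ℝ) (P : Multiset α) (f : α → ℕ) :
    φ ^ (P.map f).sum = (P.map fun a => φ ^ f a).prod := by
  induction P using Multiset.induction with
  | empty => simp
  | cons a P ih => simp [pow_add, ih]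

/-- Key factorization: `φ` to the total Kendall distance factors over pairs. -/
lemma pow_kendall_factor (φ : ℝ) (P : Multiset (Equiv.Perm (Fin m)))
    (T : Fin m → Fin m → Bool) :
    φ ^ (P.map fun V => kendallT V T).sum
      = ∏ p ∈ (pairs m).attach, gg φ P p.1 (T p.1.1 p.1.2) := by
  have hk : ∀ V : Equiv.Perm (Fin m), kendallT V T
      = ∑ p ∈ pairs m, (if ¬ (prefers V p.1 p.2 ↔ T p.1 p.2 = true) then 1 else 0) := by
    intro V
    rw [kendallT, ← Finset.filter_filter]
    exact Finset.card_filter _ _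
  simp_rw [hk]
  rw [msum_swap, ← Finset.sum_attach (pairs m)
    (fun p => (P.map fun V => if ¬ (prefers V p.1 p.2 ↔ T p.1 p.2 = true) then 1 else 0).sum),
    ← Finset.prod_pow_eq_pow_sum]
  refine Finset.prod_congr rfl fun p _ => ?_
  have hplt : p.1.1 < p.1.2 := (Finset.mem_filter.mp p.2).2
  have hne : p.1.1 ≠ p.1.2 := ne_of_lt hplt
  cases hT : T p.1.1 p.1.2 with
  | true =>
    rw [msum_ind' P _ (fun V => prefers V p.1.2 p.1.1)
      (fun V => by simp [not_prefers_iff hne])]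
    simp [gg]
  | false =>
    rw [msum_ind' P _ (fun V => prefers V p.1.1 p.1.2)
      (fun V => by simp)]
    simp [gg]

/-- A tournament witness. -/
lemma tournaments_nonempty (m : ℕ) : (tournaments m).Nonempty := by
  refine ⟨fun a b => decide (a < b), ?_⟩
  simp only [tournaments, Finset.mem_filter, Finset.mem_univ, true_and]
  constructor
  · intro a; simp
  · intro a b hab
    rcases lt_or_gt_of_ne hab with h | h
    · simp [h, asymm h]
    · simp [h, asymm h]

/-- The bijection between (constrained) tournaments and pair-orientation functions. -/
lemma sum_tournaments_eq (φ : ℝ) (P : Multiset (Equiv.Perm (Fin m)))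
    (Q : (Fin m → Fin m → Bool) → Prop) [DecidablePred Q]
    (t : Fin m × Fin m → Finset Bool)
    (hQt : ∀ T ∈ tournaments m, (Q T ↔ ∀ p ∈ pairs m, T p.1 p.2 ∈ t p)) :
    ∑ T ∈ (tournaments m).filter Q, φ ^ (P.map fun V => kendallT V T).sum
      = ∏ p ∈ pairs m, ∑ b ∈ t p, gg φ P p b := by
  rw [Finset.prod_sum]
  have key : ∑ T ∈ (tournaments m).filter Q,
      ∏ p ∈ (pairs m).attach, gg φ P p.1 (T p.1.1 p.1.2)
      = ∑ x ∈ (pairs m).pi t, ∏ p ∈ (pairs m).attach, gg φ P p.1 (x p.1 p.2) := by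
    refine Finset.sum_bij'
      (i := fun T _ => fun p (_ : p ∈ pairs m) => T p.1 p.2)
      (j := fun x _ => fun a b =>
        if h : a < b then x (a, b) (by simpa [pairs] using h)
        else if h' : b < a then !(x (b, a) (by simpa [pairs] using h')) else false)
      ?_ ?_ ?_ ?_ ?_
    · intro T hT
      rw [Finset.mem_filter] at hT
      rw [Finset.mem_pi]
      intro p hp
      exact ((hQt T hT.1).mp hT.2) p hp
    · intro x hx
      rw [Finset.mem_pi] at hx
      set T : Fin m → Fin m → Bool := fun a b =>
        if h : a < b then x (a, b) (by simpa [pairs] using h)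
        else if h' : b < a then !(x (b, a) (by simpa [pairs] using h')) else false with hTdef
      have hTt : T ∈ tournaments m := by
        simp only [tournaments, Finset.mem_filter, Finset.mem_univ, true_and]
        constructor
        · intro a; simp [hTdef]
        · intro a b hab
          rcases lt_or_gt_of_ne hab with h | h
          · simp [hTdef, h, asymm h]
          · simp [hTdef, h, asymm h]
      rw [Finset.mem_filter]
      refine ⟨hTt, (hQt T hTt).mpr ?_⟩
      intro p hp
      have hplt : p.1 < p.2 := by simpa [pairs] using hp
      have : T p.1 p.2 = x p hp := by simp [hTdef, hplt]
      rw [this]; exact hx p hp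
    · intro T hT
      rw [Finset.mem_filter] at hT
      have hTour : IsTournament T := by
        have := hT.1
        simpa [tournaments] using this
      funext a b
      by_cases h : a < b
      · simp [h]
      · by_cases h' : b < a
        · simp [h, h']
          exact hTour.2 b a (ne_of_lt h')
        · have hab : a = b := le_antisymm (le_of_not_gt h') (le_of_not_gt h)
          subst hab
          simp [hTour.1 a]
    · intro x hx
      funext p hp
      have hplt : p.1 < p.2 := by simpa [pairs] using hp
      simp [hplt]
    · intro T hT
      rfl
  rw [Finset.sum_congr rfl (fun T _ => pow_kendall_factor φ P T)]
  exact key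

/-- The constrained orientation finset for "c beats everyone". -/
def tc (c : Fin m) (p : Fin m × Fin m) : Finset Bool :=
  if p.1 = c then {true} else if p.2 = c then {false} else Finset.univ

lemma hQt_top (c : Fin m) : ∀ T ∈ tournaments m,
    ((∀ b, b ≠ c → T c b = true) ↔ ∀ p ∈ pairs m, T p.1 p.2 ∈ tc c p) := by
  intro T hT
  have hTour : IsTournament T := by simpa [tournaments] using hT
  constructor
  · intro hQ p hp
    have hplt : p.1 < p.2 := by simpa [pairs] using hp
    by_cases h1 : p.1 = c
    · have h2 : p.2 ≠ c := by rw [← h1]; exact (ne_of_gt hplt)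
      simp only [tc, if_pos h1, Finset.mem_singleton]
      rw [h1]; exact hQ p.2 h2
    · by_cases h2 : p.2 = c
      · simp only [tc, if_neg h1, if_pos h2, Finset.mem_singleton]
        have h1' : p.1 ≠ c := h1
        have := hQ p.1 h1'
        have ha := hTour.2 p.1 c (fun h => h1' h)
        rw [h2, ha, this]
        rfl
      · simp [tc, h1, h2]
  · intro hx b hbc
    rcases lt_or_gt_of_ne hbc with h | h
    · -- b < c, use pair (b, c)
      have hp : (b, c) ∈ pairs m := by simp [pairs, h]
      have := hx (b, c) hp
      rw [show tc c (b, c) = {false} by simp [tc, hbc], Finset.mem_singleton] at this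
      have ha := hTour.2 c b (Ne.symm hbc)
      rw [ha, this]
      rfl
    · -- c < b, use pair (c, b)
      have hp : (c, b) ∈ pairs m := by simp [pairs, h]
      have := hx (c, b) hp
      simpa [tc] using this

lemma den_pos (φ : ℝ) (hφ0 : 0 < φ) (P : Multiset (Equiv.Perm (Fin m)))
    (p : Fin m × Fin m) : 0 < gg φ P p true + gg φ P p false := by
  simp only [gg, if_pos, if_neg]
  positivity

/-- The per-alternative ratio. -/
lemma ratio_eq (φ : ℝ) (hφ0 : 0 < φ) (pn qn : ℕ) :
    φ ^ qn / (φ ^ pn + φ ^ qn) = 1 / (1 + φ ^ ((pn : ℤ) - (qn : ℤ))) := by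
  have hq : (0 : ℝ) < φ ^ qn := by positivity
  have hp : (0 : ℝ) < φ ^ pn := by positivity
  rw [zpow_sub₀ (ne_of_gt hφ0), zpow_natCast, zpow_natCast]
  rw [show (1 : ℝ) + φ ^ pn / φ ^ qn = (φ ^ qn + φ ^ pn) / φ ^ qn by
    field_simp]
  rw [one_div_div]
  rw [add_comm (φ ^ qn)]

end CondorcetAux

/-- under the Condorcet model with uniform prior, the posterior probability
that `c` beats all other alternatives equals `∏_{b ≠ c} 1/(1 + φ^{w_P(c,b)})`. -/
theorem condorcet_posterior_top {m : ℕ} (φ : ℝ) (hφ0 : 0 < φ) (hφ1 : φ < 1)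
    (P : Multiset (Equiv.Perm (Fin m))) (c : Fin m) :
    ∑ T ∈ (tournaments m).filter (fun T => ∀ b, b ≠ c → T c b = true), postB φ P T
      = ∏ b ∈ Finset.univ.erase c, 1 / (1 + φ ^ (wP P c b)) := by
  classical
  open CondorcetAux in
  -- Abbreviations
  set Zp : ℝ := (P.map fun V => ∑ T' ∈ tournaments m, φ ^ kendallT V T').prod with hZp
  have hZV : ∀ V : Equiv.Perm (Fin m),
      (0 : ℝ) < ∑ T' ∈ tournaments m, φ ^ kendallT V T' := by
    intro V
    refine Finset.sum_pos (fun T' _ => by positivity) (tournaments_nonempty m)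
  have hZpne : Zp ≠ 0 := by
    rw [hZp]
    have : ∀ Q : Multiset (Equiv.Perm (Fin m)),
        (Q.map fun V => ∑ T' ∈ tournaments m, φ ^ kendallT V T').prod ≠ 0 := by
      intro Q
      induction Q using Multiset.induction with
      | empty => simp
      | cons a s ih =>
        simp only [Multiset.map_cons, Multiset.prod_cons]
        exact mul_ne_zero (ne_of_gt (hZV a)) ih
    exact this P
  -- likeB in factored form
  have hlike : ∀ T : Fin m → Fin m → Bool,
      likeB φ P T = φ ^ (P.map fun V => kendallT V T).sum / Zp := by
    intro T
    rw [likeB, hZp]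
    rw [show (fun V : Equiv.Perm (Fin m) => φ ^ kendallT V T /
        ∑ T' ∈ tournaments m, φ ^ kendallT V T')
      = fun V => (fun V => φ ^ kendallT V T) V /
          (fun V => ∑ T' ∈ tournaments m, φ ^ kendallT V T') V from rfl]
    rw [Multiset.prod_map_div, pow_msum]
  -- numerator and denominator
  set num : ℝ := ∏ p ∈ pairs m, ∑ b ∈ tc c p, gg φ P p b with hnum
  set den : ℝ := ∏ p ∈ pairs m, (gg φ P p true + gg φ P p false) with hden
  have hdenpos : (0 : ℝ) < den :=
    Finset.prod_pos fun p _ => den_pos φ hφ0 P p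
  have hsum_all : ∑ T ∈ tournaments m, φ ^ (P.map fun V => kendallT V T).sum = den := by
    have h := sum_tournaments_eq (m := m) φ P (fun _ => True)
      (fun _ => (Finset.univ : Finset Bool))
      (fun T _ => by simp)
    rw [Finset.filter_true_of_mem (fun _ _ => trivial)] at h
    rw [h, hden]
    refine Finset.prod_congr rfl fun p _ => ?_
    rw [Fintype.sum_bool]
  have hsum_top : ∑ T ∈ (tournaments m).filter (fun T => ∀ b, b ≠ c → T c b = true),
      φ ^ (P.map fun V => kendallT V T).sum = num :=
    sum_tournaments_eq φ P _ (tc c) (hQt_top c)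
  -- the LHS equals num / den
  have hD : ∑ T' ∈ tournaments m, likeB φ P T' = den / Zp := by
    simp_rw [hlike]
    rw [← Finset.sum_div, hsum_all]
  have hLHS : ∑ T ∈ (tournaments m).filter (fun T => ∀ b, b ≠ c → T c b = true),
      postB φ P T = num / den := by
    simp_rw [postB, hD, hlike]
    rw [← Finset.sum_div, ← Finset.sum_div, hsum_top]
    rw [div_div_div_eq]
    rw [div_eq_div_iff (mul_ne_zero hZpne (ne_of_gt hdenpos)) (ne_of_gt hdenpos)]
    ring
  rw [hLHS]
  -- now compute num / den as a product of per-pair ratios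
  rw [hnum, hden, ← Finset.prod_div_distrib]
  -- factors for pairs not involving c are 1
  have hsplit : ∏ p ∈ pairs m,
      (∑ b ∈ tc c p, gg φ P p b) / (gg φ P p true + gg φ P p false)
      = ∏ p ∈ (pairs m).filter (fun p => p.1 = c ∨ p.2 = c),
          (∑ b ∈ tc c p, gg φ P p b) / (gg φ P p true + gg φ P p false) := by
    rw [← Finset.prod_filter_mul_prod_filter_not (pairs m) (fun p => p.1 = c ∨ p.2 = c)]
    have : ∏ p ∈ (pairs m).filter (fun p => ¬ (p.1 = c ∨ p.2 = c)),
        (∑ b ∈ tc c p, gg φ P p b) / (gg φ P p true + gg φ P p false) = 1 := by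
      refine Finset.prod_eq_one fun p hp => ?_
      rw [Finset.mem_filter] at hp
      push_neg at hp
      obtain ⟨-, h1, h2⟩ := hp
      rw [show tc c p = Finset.univ by simp [tc, h1, h2], Fintype.sum_bool]
      exact div_self (ne_of_gt (den_pos φ hφ0 P p))
    rw [this, mul_one]
  rw [hsplit]
  -- reindex by the alternative b ≠ c
  refine Finset.prod_nbij' (i := fun p => if p.1 = c then p.2 else p.1)
    (j := fun b => if c < b then (c, b) else (b, c)) ?_ ?_ ?_ ?_ ?_
  · intro p hp
    rw [Finset.mem_filter] at hp
    obtain ⟨hpp, hor⟩ := hp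
    have hplt : p.1 < p.2 := by simpa [pairs] using hpp
    rcases hor with h1 | h2
    · rw [if_pos h1]
      refine Finset.mem_erase.mpr ⟨?_, Finset.mem_univ _⟩
      rw [← h1]; exact (ne_of_gt hplt)
    · by_cases h1 : p.1 = c
      · rw [if_pos h1]
        refine Finset.mem_erase.mpr ⟨?_, Finset.mem_univ _⟩
        rw [← h1]; exact (ne_of_gt hplt)
      · rw [if_neg h1]
        exact Finset.mem_erase.mpr ⟨h1, Finset.mem_univ _⟩
  · intro b hb
    have hbc : b ≠ c := (Finset.mem_erase.mp hb).1
    by_cases h : c < b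
    · rw [if_pos h]
      simp [pairs, h]
    · rw [if_neg h]
      have hlt : b < c := lt_of_le_of_ne (le_of_not_gt h) hbc
      simp [pairs, hlt]
  · intro p hp
    rw [Finset.mem_filter] at hp
    obtain ⟨hpp, hor⟩ := hp
    have hplt : p.1 < p.2 := by simpa [pairs] using hpp
    by_cases h1 : p.1 = c
    · rw [if_pos h1]
      rw [if_pos (by rw [← h1]; exact hplt)]
      exact Prod.ext h1.symm rfl
    · have h2 : p.2 = c := by tauto
      rw [if_neg h1]
      rw [if_neg (by rw [← h2]; exact fun h => absurd (lt_trans hplt h) (lt_irrefl _))]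
      exact Prod.ext rfl h2.symm
  · intro b hb
    have hbc : b ≠ c := (Finset.mem_erase.mp hb).1
    by_cases h : c < b
    · rw [if_pos h]
      simp
    · rw [if_neg h]
      simp [hbc]
  · intro p hp
    rw [Finset.mem_filter] at hp
    obtain ⟨hpp, hor⟩ := hp
    have hplt : p.1 < p.2 := by simpa [pairs] using hpp
    by_cases h1 : p.1 = c
    · -- p = (c, p.2), b := p.2, forced true
      rw [if_pos h1]
      rw [show tc c p = {true} by simp [tc, h1], Finset.sum_singleton]
      have e1 : gg φ P p true = φ ^ (Multiset.filter (fun V => prefers V p.2 p.1) P).card := rfl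
      have e2 : gg φ P p false = φ ^ (Multiset.filter (fun V => prefers V p.1 p.2) P).card := rfl
      rw [e1, e2, add_comm, h1, wP]
      exact ratio_eq φ hφ0 _ _
    · -- p = (p.1, c), b := p.1, forced false
      have h2 : p.2 = c := by tauto
      rw [if_neg h1]
      rw [show tc c p = {false} by simp [tc, h1, h2], Finset.sum_singleton]
      have e1 : gg φ P p true = φ ^ (Multiset.filter (fun V => prefers V p.2 p.1) P).card := rfl
      have e2 : gg φ P p false = φ ^ (Multiset.filter (fun V => prefers V p.1 p.2) P).card := rfl
      rw [e1, e2, h2, wP]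
      exact ratio_eq φ hφ0 _ _
end

section
/- For dispersion 0 < φ < 1/m!, in the Mallows model with fixed dispersion over m alternatives: if the Kemeny score of alternative c (the minimum of Kendall(P,V) over linear orders V ranking c first) is strictly smaller than the Kemeny score of alternative b, then Σ_{V ∈ L_c(C)} φ^{Kendall(P,V)} > Σ_{V ∈ L_b(C)} φ^{Kendall(P,V)}. -/
open Finset

/-- The Kemeny score of alternative `c`: the minimum total Kendall-tau distance from
the profile to a linear order ranking `c` first. -/
noncomputable def kemenyScore {m : ℕ} (P : Multiset (Equiv.Perm (Fin m))) (c : Fin m) : ℕ :=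
  sInf {n | ∃ V : Equiv.Perm (Fin m), (V.symm c : ℕ) = 0 ∧ kendallP P V = n}

/-- for `0 < φ < 1/m!`, a strictly smaller Kemeny score implies a strictly
larger total Mallows likelihood over the linear orders ranking the alternative first. -/
theorem kemeny_score_dominates {m : ℕ} (φ : ℝ) (hφ0 : 0 < φ)
    (hφ1 : φ < 1 / (Nat.factorial m))
    (P : Multiset (Equiv.Perm (Fin m))) (c b : Fin m)
    (h : kemenyScore P c < kemenyScore P b) :
    ∑ V ∈ Finset.univ.filter (fun V : Equiv.Perm (Fin m) => (V.symm c : ℕ) = 0),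
        φ ^ kendallP P V
      > ∑ V ∈ Finset.univ.filter (fun V : Equiv.Perm (Fin m) => (V.symm b : ℕ) = 0),
          φ ^ kendallP P V := by
  have hm1 : (1:ℝ) ≤ (Nat.factorial m : ℝ) := by exact_mod_cast Nat.one_le_iff_ne_zero.mpr (Nat.factorial_ne_zero m)
  have hφle1 : φ ≤ 1 := le_of_lt (lt_of_lt_of_le hφ1 (div_le_one_of_le₀ hm1 (by positivity)))
  set kc := kemenyScore P c with hkc
  have hmem : kc ∈ {n | ∃ V : Equiv.Perm (Fin m), (V.symm c : ℕ) = 0 ∧ kendallP P V = n} := by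
    apply Nat.sInf_mem
    refine ⟨kendallP P (Equiv.swap c ⟨0, c.pos⟩), ⟨Equiv.swap c ⟨0, c.pos⟩, ?_, rfl⟩⟩
    simp [Equiv.swap_apply_left]
  obtain ⟨V₀, hV₀c, hV₀k⟩ := hmem
  have hlow : φ ^ kc ≤ ∑ V ∈ Finset.univ.filter (fun V : Equiv.Perm (Fin m) => (V.symm c : ℕ) = 0),
      φ ^ kendallP P V := by
    rw [← hV₀k]
    exact Finset.single_le_sum (f := fun V => φ ^ kendallP P V) (fun i _ => by positivity)
      (Finset.mem_filter.mpr ⟨Finset.mem_univ _, hV₀c⟩)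
  have hub : ∀ V ∈ Finset.univ.filter (fun V : Equiv.Perm (Fin m) => (V.symm b : ℕ) = 0),
      φ ^ kendallP P V ≤ φ ^ (kc + 1) := by
    intro V hV
    apply pow_le_pow_of_le_one hφ0.le hφle1
    have : kemenyScore P b ≤ kendallP P V :=
      Nat.sInf_le ⟨V, (Finset.mem_filter.mp hV).2, rfl⟩
    omega
  have hsum := Finset.sum_le_card_nsmul _ _ _ hub
  have hcard : ((Finset.univ.filter (fun V : Equiv.Perm (Fin m) => (V.symm b : ℕ) = 0)).card : ℝ)
      ≤ (Nat.factorial m : ℝ) := by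
    have h1 : (Finset.univ.filter (fun V : Equiv.Perm (Fin m) => (V.symm b : ℕ) = 0)).card
        ≤ (Finset.univ : Finset (Equiv.Perm (Fin m))).card := Finset.card_filter_le _ _
    have h2 : (Finset.univ : Finset (Equiv.Perm (Fin m))).card = Nat.factorial m := by
      rw [Finset.card_univ, Fintype.card_perm, Fintype.card_fin]
    exact_mod_cast h1.trans_eq h2
  have hkey : (Nat.factorial m : ℝ) * φ ^ (kc + 1) < φ ^ kc := by
    have hφpos : (0:ℝ) < φ ^ kc := by positivity
    have : (Nat.factorial m : ℝ) * φ < 1 := by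
      rw [lt_div_iff₀ (by positivity : (0:ℝ) < (Nat.factorial m : ℝ))] at hφ1
      linarith [hφ1]
    calc (Nat.factorial m : ℝ) * φ ^ (kc + 1) = ((Nat.factorial m : ℝ) * φ) * φ ^ kc := by ring
    _ < 1 * φ ^ kc := by exact mul_lt_mul_of_pos_right this hφpos
    _ = φ ^ kc := one_mul _
  calc ∑ V ∈ Finset.univ.filter (fun V : Equiv.Perm (Fin m) => (V.symm b : ℕ) = 0), φ ^ kendallP P V
      ≤ ((Finset.univ.filter (fun V : Equiv.Perm (Fin m) => (V.symm b : ℕ) = 0)).card : ℝ) * φ ^ (kc + 1) := by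
        simpa [nsmul_eq_mul] using hsum
    _ ≤ (Nat.factorial m : ℝ) * φ ^ (kc + 1) := by
        apply mul_le_mul_of_nonneg_right hcard (by positivity)
    _ < φ ^ kc := hkey
    _ ≤ _ := hlow
end

section
/- In the Mallows model Pr(V|W) ∝ φ^{Kendall(V,W)} with 0 < φ < 1 and W a linear order ranking c first: for any alternative b ≠ c, Pr(c ≻ b) > 1/2. -/
open Finset

theorem Finset.sum_lt_sum_of_add_comp_involutive {α M : Type*} [Fintype α] [AddCommMonoid M]
    [LinearOrder M] [IsOrderedCancelAddMonoid M] {f g : α → M} {ι : α → α}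
    (hι : Function.Involutive ι) (hle : ∀ a, f a + f (ι a) ≤ g a + g (ι a))
    (hlt : ∃ a, f a + f (ι a) < g a + g (ι a)) : ∑ a, f a < ∑ a, g a := by
  have hdouble (h : α → M) : ∑ a, (h a + h (ι a)) = ∑ a, h a + ∑ a, h a := by
    rw [sum_add_distrib]
    exact congrArg _ (Equiv.sum_comp hι.toPerm h)
  have h2 : ∑ a, f a + ∑ a, f a < ∑ a, g a + ∑ a, g a := by
    rw [← hdouble, ← hdouble]
    obtain ⟨a, ha⟩ := hlt
    exact sum_lt_sum (fun a _ => hle a) ⟨a, mem_univ a, ha⟩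
  by_contra! h
  exact h2.not_ge (add_le_add h h)

theorem ite_and_add_ite_and_le_of_imp {P Q R S : Prop} [Decidable P] [Decidable Q] [Decidable R]
    [Decidable S] (hPQ : P → Q) (hRS : R → S) :
    (if P ∧ S then 1 else 0 : ℕ) + (if Q ∧ R then 1 else 0) ≤
      (if P ∧ R then 1 else 0) + (if Q ∧ S then 1 else 0) := by
  by_cases P <;> by_cases Q <;> by_cases R <;> by_cases S <;> simp_all

section

variable {m : ℕ}

theorem prefers_irrefl (V : Equiv.Perm (Fin m)) (x : Fin m) : ¬ prefers V x x :=
  lt_irrefl _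

theorem prefers.asymm {V : Equiv.Perm (Fin m)} {x y : Fin m} (h : prefers V x y) :
    ¬ prefers V y x :=
  lt_asymm h

theorem prefers.trans {V : Equiv.Perm (Fin m)} {x y z : Fin m} (h : prefers V x y)
    (h' : prefers V y z) : prefers V x z :=
  lt_trans h h'

theorem not_prefers_iff {V : Equiv.Perm (Fin m)} {x y : Fin m} (h : x ≠ y) :
    ¬ prefers V x y ↔ prefers V y x := by
  rw [prefers, prefers, not_lt, le_iff_lt_or_eq, or_iff_left (V.symm.injective.ne h.symm)]

theorem prefers_swap_mul (V : Equiv.Perm (Fin m)) (c b x y : Fin m) :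
    prefers (Equiv.swap c b * V) x y ↔ prefers V (Equiv.swap c b x) (Equiv.swap c b y) := by
  simp [prefers, Equiv.Perm.mul_def, Equiv.symm_swap]

theorem kendall_eq_card_discordant (V W : Equiv.Perm (Fin m)) :
    kendall V W = #{p : Fin m × Fin m | prefers V p.1 p.2 ∧ prefers W p.2 p.1} := by
  refine card_nbij' (fun p => if prefers V p.1 p.2 then p else p.swap)
    (fun p => if p.1 < p.2 then p else p.swap) ?_ ?_ ?_ ?_ <;>
  · rintro ⟨x, y⟩ h
    simp only [coe_filter, Set.mem_ofPred_eq, mem_univ, true_and, Prod.swap] at h ⊢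
    split_ifs <;> grind [prefers, Equiv.apply_eq_iff_eq]

theorem kendall_swap_mul (V W : Equiv.Perm (Fin m)) (c b : Fin m) :
    kendall (Equiv.swap c b * V) W = #{p : Fin m × Fin m |
      prefers V p.1 p.2 ∧ prefers W (Equiv.swap c b p.2) (Equiv.swap c b p.1)} := by
  rw [kendall_eq_card_discordant]
  refine card_nbij' (Prod.map (Equiv.swap c b) (Equiv.swap c b))
    (Prod.map (Equiv.swap c b) (Equiv.swap c b)) ?_ ?_ ?_ ?_ <;>
  · rintro ⟨x, y⟩ h
    simp_all [prefers_swap_mul]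

theorem kendall_swap_mul_lt {V W : Equiv.Perm (Fin m)} {c b : Fin m} (hW : prefers W c b)
    (hV : prefers V b c) : kendall (Equiv.swap c b * V) W < kendall V W := by
  have hbc : b ≠ c := fun h => prefers_irrefl V b (h ▸ hV)
  rw [kendall_swap_mul, kendall_eq_card_discordant, card_filter, card_filter]
  -- Pair `(x, y)` with the pair obtained by swapping `b` and `c` in `x` if `x ∈ {b, c}`, in `y`
  -- otherwise. On each such couple the swap adds no discordance (a rearrangement inequality),
  -- and it removes the discordance of `(b, c)`.
  refine sum_lt_sum_of_add_comp_involutive (ι := fun p => if p.1 = b ∨ p.1 = c then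
    (Equiv.swap c b p.1, p.2) else (p.1, Equiv.swap c b p.2)) ?_ ?_ ⟨(b, c), ?_⟩
  · rintro ⟨x, y⟩
    by_cases hx : x = b ∨ x = c
    · have : Equiv.swap c b x = b ∨ Equiv.swap c b x = c := by rcases hx with rfl | rfl <;> simp
      simp [hx, this]
    · simp [hx]
  · rintro ⟨x, y⟩
    by_cases hx : x = b ∨ x = c <;> by_cases hy : y = b ∨ y = c
    · rcases hx with rfl | rfl <;> rcases hy with rfl | rfl <;>
        simp [prefers_irrefl, hV.asymm, hW.asymm]
    · rw [not_or] at hy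
      have hVy := ite_and_add_ite_and_le_of_imp (fun h : prefers V c y => hV.trans h)
        (fun h : prefers W y c => h.trans hW)
      rcases hx with rfl | rfl
      · simpa [hbc, Equiv.swap_apply_of_ne_of_ne hy.2 hy.1, add_comm] using hVy
      · simpa [hbc, Equiv.swap_apply_of_ne_of_ne hy.2 hy.1] using hVy
    · rw [not_or] at hx
      have hWx := ite_and_add_ite_and_le_of_imp (fun h : prefers V x b => h.trans hV)
        (fun h : prefers W b x => hW.trans h)
      rcases hy with rfl | rfl
      · simpa [hx, Equiv.swap_apply_of_ne_of_ne hx.2 hx.1] using hWx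
      · simpa [hx, Equiv.swap_apply_of_ne_of_ne hx.2 hx.1, add_comm] using hWx
    · rw [not_or] at hx hy
      simp [hx, Equiv.swap_apply_of_ne_of_ne hx.2 hx.1, Equiv.swap_apply_of_ne_of_ne hy.2 hy.1]
  · simp [hbc, hV, hW, prefers_irrefl, hW.asymm]

theorem sum_pow_kendall_prefers_lt {φ : ℝ} (hφ0 : 0 < φ) (hφ1 : φ < 1) {W : Equiv.Perm (Fin m)}
    {c b : Fin m} (hW : prefers W c b) :
    ∑ V with prefers V b c, φ ^ kendall V W < ∑ V with prefers V c b, φ ^ kendall V W := by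
  calc ∑ V with prefers V b c, φ ^ kendall V W
      < ∑ V with prefers V b c, φ ^ kendall (Equiv.swap c b * V) W := by
        refine sum_lt_sum_of_nonempty ⟨Equiv.swap c b * W, ?_⟩ fun V hV => ?_
        · simpa [prefers_swap_mul] using hW
        · exact pow_lt_pow_right_of_lt_one₀ hφ0 hφ1 (kendall_swap_mul_lt hW (mem_filter.1 hV).2)
    _ = ∑ V with prefers V c b, φ ^ kendall V W := by
        refine sum_nbij' (Equiv.swap c b * ·) (Equiv.swap c b * ·) ?_ ?_ ?_ ?_ fun _ _ => rfl <;>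
          simp [prefers_swap_mul, ← mul_assoc]

end

/-- in the Mallows model with ground truth `W` ranking `c` first,
for any `b ≠ c`, `Pr(c ≻ b) > 1/2`. -/
theorem mallows_top_majority {m : ℕ} (φ : ℝ) (hφ0 : 0 < φ) (hφ1 : φ < 1)
    (W : Equiv.Perm (Fin m)) (c b : Fin m)
    (htop : (W.symm c : ℕ) = 0) (hb : b ≠ c) :
    (∑ V ∈ Finset.univ.filter (fun V : Equiv.Perm (Fin m) => prefers V c b),
        φ ^ kendall V W) / (∑ V : Equiv.Perm (Fin m), φ ^ kendall V W)
      > 1 / 2 := by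
  have hW : prefers W c b := by
    rw [prefers, Fin.lt_def, htop, Nat.pos_iff_ne_zero]
    exact fun h => hb (W.symm.injective (Fin.ext (h.trans htop.symm)))
  have hsplit : ∑ V, φ ^ kendall V W =
      ∑ V with prefers V c b, φ ^ kendall V W + ∑ V with prefers V b c, φ ^ kendall V W := by
    rw [← sum_filter_add_sum_filter_not univ (prefers · c b)]
    simp only [not_prefers_iff hb.symm]
  have hpos : 0 < ∑ V with prefers V c b, φ ^ kendall V W :=
    sum_pos (fun _ _ => pow_pos hφ0 _) ⟨W, mem_filter.2 ⟨mem_univ W, hW⟩⟩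
  have hlt := sum_pow_kendall_prefers_lt hφ0 hφ1 hW
  rw [hsplit, gt_iff_lt, lt_div_iff₀ (by positivity)]
  linarith
end

section
/- The random variables {X_{c≻b} : c ≻_W b} indexed by the edges of a tournament W over m ≥ 3 alternatives, where X_{c≻b}(V) = +1 if c ≻_V b and −1 otherwise for a linear order V, are not linearly dependent as functions on L(C): no nontrivial linear combination of them is a constant function on the set of all linear orders. -/
open Finset

lemma swap01_lt_iff {m : ℕ} [NeZero m] (hm : 3 ≤ m) (x y : Fin m)
    (h1 : ¬(x = 0 ∧ y = 1)) (h2 : ¬(x = 1 ∧ y = 0)) :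
    Equiv.swap (0 : Fin m) 1 x < Equiv.swap (0 : Fin m) 1 y ↔ x < y := by
  have hone : ((1 : Fin m) : ℕ) = 1 := by
    rw [Fin.val_one']; exact Nat.mod_eq_of_lt (by omega)
  rw [Equiv.swap_apply_def, Equiv.swap_apply_def]
  split_ifs with hA hB hC hD hE hF hG <;>
    simp only [Fin.lt_def, Fin.ext_iff, hone, Fin.val_zero, not_and] at * <;>
    omega

/-- the ±1-valued random variables `X_{c≻b}` indexed by the edges of a
tournament `W` are not linearly dependent: if a linear combination of them is constant
on the set of all linear orders, then all coefficients are zero. -/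
theorem tournament_indicators_independent {m : ℕ} (hm : 3 ≤ m)
    (T : Fin m → Fin m → Bool) (hT : IsTournament T)
    (α : Fin m → Fin m → ℝ)
    (hconst : ∃ r : ℝ, ∀ V : Equiv.Perm (Fin m),
      ∑ p ∈ Finset.univ.filter (fun p : Fin m × Fin m => T p.1 p.2 = true),
        α p.1 p.2 * (if prefers V p.1 p.2 then (1 : ℝ) else -1) = r) :
    ∀ a b : Fin m, T a b = true → α a b = 0 := by
  intro a b hab
  haveI : NeZero m := ⟨by omega⟩
  have hone : ((1 : Fin m) : ℕ) = 1 := by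
    rw [Fin.val_one']; exact Nat.mod_eq_of_lt (by omega)
  have hne : a ≠ b := by
    rintro rfl
    rw [hT.1 a] at hab
    exact Bool.false_ne_true hab
  have h01 : (0 : Fin m) ≠ 1 := by
    rw [Ne, Fin.ext_iff, hone, Fin.val_zero]
    omega
  obtain ⟨V, hV0, hV1⟩ : ∃ V : Equiv.Perm (Fin m), V 0 = a ∧ V 1 = b := by
    refine ⟨(Equiv.swap (1 : Fin m) ((Equiv.swap (0 : Fin m) a).symm b)).trans
      (Equiv.swap (0 : Fin m) a), ?_, ?_⟩
    · have hb0 : (Equiv.swap (0 : Fin m) a).symm b ≠ 0 := by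
        intro h
        apply hne
        have := congrArg (Equiv.swap (0 : Fin m) a) h
        rw [Equiv.apply_symm_apply, Equiv.swap_apply_left] at this
        exact this.symm
      simp only [Equiv.trans_apply]
      rw [Equiv.swap_apply_of_ne_of_ne h01 (Ne.symm hb0), Equiv.swap_apply_left]
    · simp only [Equiv.trans_apply, Equiv.swap_apply_left, Equiv.apply_symm_apply]
  have hVa : V.symm a = 0 := by rw [← hV0, Equiv.symm_apply_apply]
  have hVb : V.symm b = 1 := by rw [← hV1, Equiv.symm_apply_apply]
  obtain ⟨V', hV'symm⟩ : ∃ V' : Equiv.Perm (Fin m),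
      ∀ y, V'.symm y = Equiv.swap (0 : Fin m) 1 (V.symm y) := by
    exact ⟨(Equiv.swap (0 : Fin m) 1).trans V, fun y => by
      simp [Equiv.symm_trans_apply]⟩
  obtain ⟨r, hr⟩ := hconst
  have h1 := hr V
  have h2 := hr V'
  have hmem : (a, b) ∈ Finset.univ.filter (fun p : Fin m × Fin m => T p.1 p.2 = true) := by
    simp [hab]
  have hsum : ∑ p ∈ Finset.univ.filter (fun p : Fin m × Fin m => T p.1 p.2 = true),
      (α p.1 p.2 * (if prefers V p.1 p.2 then (1 : ℝ) else -1)
      - α p.1 p.2 * (if prefers V' p.1 p.2 then (1 : ℝ) else -1)) = 0 := by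
    rw [Finset.sum_sub_distrib, h1, h2, sub_self]
  have hsingle : ∑ p ∈ Finset.univ.filter (fun p : Fin m × Fin m => T p.1 p.2 = true),
      (α p.1 p.2 * (if prefers V p.1 p.2 then (1 : ℝ) else -1)
      - α p.1 p.2 * (if prefers V' p.1 p.2 then (1 : ℝ) else -1)) = 2 * α a b := by
    rw [Finset.sum_eq_single (a, b)]
    · have hpV : prefers V a b := by
        rw [prefers, hVa, hVb]
        simp only [Fin.lt_def, hone, Fin.val_zero]
        omega
      have hpV' : ¬ prefers V' a b := by
        rw [prefers, hV'symm, hV'symm, hVa, hVb, Equiv.swap_apply_left,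
          Equiv.swap_apply_right]
        simp only [Fin.lt_def, hone, Fin.val_zero]
        omega
      rw [if_pos hpV, if_neg hpV']
      ring
    · intro p hp hpne
      have hiff : prefers V' p.1 p.2 ↔ prefers V p.1 p.2 := by
        rw [prefers, prefers, hV'symm, hV'symm]
        apply swap01_lt_iff hm
        · rintro ⟨hx, hy⟩
          apply hpne
          have ha' : p.1 = a := by
            have := congrArg V hx
            rw [Equiv.apply_symm_apply, hV0] at this; exact this
          have hb' : p.2 = b := by
            have := congrArg V hy
            rw [Equiv.apply_symm_apply, hV1] at this; exact this
          exact Prod.ext ha' hb'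
        · rintro ⟨hx, hy⟩
          have hb' : p.1 = b := by
            have := congrArg V hx
            rw [Equiv.apply_symm_apply, hV1] at this; exact this
          have ha' : p.2 = a := by
            have := congrArg V hy
            rw [Equiv.apply_symm_apply, hV0] at this; exact this
          have hba : T b a = true := by
            rw [← hb', ← ha']
            simpa using hp
          rw [hT.2 b a (Ne.symm hne), hab] at hba
          simp at hba
      rw [if_congr hiff rfl rfl]
      ring
    · intro h
      exact absurd hmem h
  rw [hsingle] at hsum
  linarith
end

section
/- Consider the profile P* over alternatives C = {c, b, c₃, …, c_m} consisting of k+1 copies of c ≻ b ≻ c₃ ≻ ⋯ ≻ c_m and k−1 copies of b ≻ c₃ ≻ ⋯ ≻ c_m ≻ c. Then for the Mallows likelihood, (Σ_{V∈L_c(C)} φ^{Kendall(P*,V)}) / (Σ_{V∈L_b(C)} φ^{Kendall(P*,V)}) = [(1+φ^{2k}+⋯+φ^{2k(m−2)}) / (1+φ²+⋯+φ^{2(m−2)})] · (1/φ²). -/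
open Finset

/-!
Write a ranking `W` through its position map `x = W⁻¹` and split `x` into the position `p` of the
alternative `0` and the relative order `y` of the others. Against the identity order the Kendall
distance is `p + inv y`, against the rotation `1 ≻ ⋯ ≻ n ≻ 0` it is `(n - p) + inv y`, so the
distance to `P*` is `2k·inv y + 2p + (k-1)n`. Rankings with `0` first are `p = 0` with `y` free,
rankings with `1` first are `p ≥ 1` with `y 0 = 0`. Both sums therefore factor through the
inversion generating function `∑ q ^ inv`, and its recursion
`∑_{Sₙ₊₁} q ^ inv = (1 + q + ⋯ + qⁿ) ∑_{Sₙ} q ^ inv` leaves exactly the claimed ratio.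
-/

open Equiv

variable {n : ℕ}

namespace Fin

theorem card_filter_fst_lt_snd_succ (Q : Fin (n + 1) × Fin (n + 1) → Prop) [DecidablePred Q] :
    #{q | q.1 < q.2 ∧ Q q} =
      #{b : Fin n | Q (0, b.succ)} + #{q : Fin n × Fin n | q.1 < q.2 ∧ Q (q.1.succ, q.2.succ)} := by
  simp only [card_filter, Fintype.sum_prod_type, sum_univ_succ, false_and, if_false, succ_pos,
    true_and, not_lt_zero, succ_lt_succ_iff, zero_add]

theorem card_filter_succAbove_lt (p : Fin (n + 1)) : #{c : Fin n | p.succAbove c < p} = p := by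
  simp_rw [succAbove_lt_iff_castSucc_lt, lt_def, val_castSucc]
  rw [card_filter_val_lt]
  exact min_eq_right (is_le p)

theorem card_filter_lt_succAbove (p : Fin (n + 1)) : #{c : Fin n | p < p.succAbove c} = n - p := by
  simp_rw [lt_succAbove_iff_le_castSucc, ← not_lt, ← succAbove_lt_iff_castSucc_lt]
  rw [filter_not, card_sdiff_of_subset (filter_subset _ _), card_univ, Fintype.card_fin,
    card_filter_succAbove_lt]

end Fin

theorem card_filter_equiv_apply {α β : Type*} [Fintype α] [Fintype β] (e : α ≃ β) (P : β → Prop)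
    [DecidablePred P] : #{a | P (e a)} = #{b | P b} := by
  simp only [card_filter]
  exact Equiv.sum_comp e fun b => if P b then 1 else 0

theorem Equiv.Perm.not_lt_iff_lt (x : Perm (Fin n)) {a b : Fin n} (h : a ≠ b) :
    ¬ x a < x b ↔ x b < x a :=
  not_lt.trans (x.injective.ne h.symm).le_iff_lt

def consPerm (p : Fin (n + 1)) (y : Perm (Fin n)) : Perm (Fin (n + 1)) :=
  (finSuccEquiv n).trans ((optionCongr y).trans (finSuccEquiv' p).symm)

@[simp]
theorem consPerm_zero (p : Fin (n + 1)) (y : Perm (Fin n)) : consPerm p y 0 = p := by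
  simp [consPerm]

@[simp]
theorem consPerm_succ (p : Fin (n + 1)) (y : Perm (Fin n)) (i : Fin n) :
    consPerm p y i.succ = p.succAbove (y i) := by
  simp [consPerm]

theorem consPerm_injective :
    Function.Injective (fun q : Fin (n + 1) × Perm (Fin n) => consPerm q.1 q.2) := by
  rintro ⟨p, y⟩ ⟨p', y'⟩ h
  have hp : p = p' := by simpa using congr($h 0)
  subst hp
  exact Prod.ext rfl (Equiv.ext fun i => by simpa using congr($h i.succ))

section Sums

variable {M : Type*} [AddCommMonoid M]

theorem sum_perm_eq_sum_consPerm (f : Perm (Fin (n + 1)) → M) :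
    ∑ x, f x = ∑ p, ∑ y, f (consPerm p y) := by
  have hcard : Fintype.card (Fin (n + 1) × Perm (Fin n)) = Fintype.card (Perm (Fin (n + 1))) := by
    simp [Fintype.card_perm, Nat.factorial_succ]
  rw [← Fintype.sum_prod_type']
  exact (Fintype.sum_bijective _ ((Fintype.bijective_iff_injective_and_card _).2
    ⟨consPerm_injective, hcard⟩) _ _ fun _ => rfl).symm

theorem sum_perm_symm {α : Type*} [Fintype α] [DecidableEq α] (f : Perm α → M) :
    ∑ W : Perm α, f W.symm = ∑ x, f x :=
  Equiv.sum_comp (Equiv.inv (Perm α)) f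

theorem sum_ite_apply_zero_eq_zero (h : Perm (Fin (n + 1)) → M) :
    ∑ y : Perm (Fin (n + 1)), (if y 0 = 0 then h y else 0) = ∑ z, h (consPerm 0 z) := by
  rw [sum_perm_eq_sum_consPerm]
  simp

theorem sum_filter_symm_zero_eq_zero (g : Perm (Fin (n + 1)) → M) :
    ∑ W ∈ univ.filter (fun W : Perm (Fin (n + 1)) => (W.symm 0 : ℕ) = 0), g W
      = ∑ y, g (consPerm 0 y).symm := by
  rw [sum_filter, ← sum_perm_symm]
  simp only [symm_symm, Fin.val_eq_zero_iff]
  exact sum_ite_apply_zero_eq_zero fun x => g x.symm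

theorem sum_filter_symm_one_eq_zero (g : Perm (Fin (n + 2)) → M) :
    ∑ W ∈ univ.filter (fun W : Perm (Fin (n + 2)) => (W.symm 1 : ℕ) = 0), g W
      = ∑ t : Fin (n + 1), ∑ z, g (consPerm t.succ (consPerm 0 z)).symm := by
  rw [sum_filter, ← sum_perm_symm, sum_perm_eq_sum_consPerm, Fin.sum_univ_succ]
  simp only [symm_symm, ← Fin.succ_zero_eq_one, consPerm_succ, Fin.val_eq_zero_iff,
    Fin.succAbove_zero, Fin.succ_ne_zero, if_false, sum_const_zero, zero_add,
    Fin.succAbove_eq_zero_iff (Fin.succ_ne_zero _)]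
  exact sum_congr rfl fun t _ => sum_ite_apply_zero_eq_zero fun y => g (consPerm t.succ y).symm

end Sums

def inversions (x : Perm (Fin n)) : ℕ := #{q : Fin n × Fin n | q.1 < q.2 ∧ x q.2 < x q.1}

theorem inversions_consPerm (p : Fin (n + 1)) (y : Perm (Fin n)) :
    inversions (consPerm p y) = p + inversions y := by
  rw [inversions, Fin.card_filter_fst_lt_snd_succ]
  simp only [consPerm_zero, consPerm_succ, Fin.succAbove_lt_succAbove_iff]
  rw [card_filter_equiv_apply y (fun c => p.succAbove c < p), Fin.card_filter_succAbove_lt]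
  rfl

def mahonian {R : Type*} [CommSemiring R] (n : ℕ) (q : R) : R :=
  ∑ y : Perm (Fin n), q ^ inversions y

theorem mahonian_succ {R : Type*} [CommSemiring R] (q : R) :
    mahonian (n + 1) q = (∑ t ∈ range (n + 1), q ^ t) * mahonian n q := by
  rw [mahonian, sum_perm_eq_sum_consPerm, ← Fin.sum_univ_eq_sum_range, sum_mul]
  simp only [inversions_consPerm, pow_add, mahonian, mul_sum]

theorem mahonian_pos (n : ℕ) {q : ℝ} (hq : 0 < q) : 0 < mahonian n q :=
  sum_pos (fun _ _ => pow_pos hq _) univ_nonempty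

theorem prefers_one (a b : Fin n) : prefers 1 a b ↔ a < b := Iff.rfl

theorem prefers_symm (x : Perm (Fin n)) (a b : Fin n) : prefers x.symm a b ↔ x a < x b := Iff.rfl

theorem not_prefers_finRotate_zero (b : Fin (n + 1)) : ¬ prefers (finRotate (n + 1)) 0 b := by
  rw [prefers, (symm_apply_eq _).2 finRotate_last.symm, not_lt]
  exact Fin.le_last _

theorem prefers_finRotate_succ (a b : Fin n) :
    prefers (finRotate (n + 1)) a.succ b.succ ↔ a < b := by
  have h (i : Fin n) : (finRotate (n + 1)).symm i.succ = i.castSucc := by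
    rw [symm_apply_eq, finRotate_apply, Fin.coeSucc_eq_succ]
  rw [prefers, h, h, Fin.castSucc_lt_castSucc_iff]

theorem kendall_one_symm (x : Perm (Fin n)) : kendall 1 x.symm = inversions x := by
  rw [kendall, inversions]
  congr 1
  refine filter_congr fun q _ => and_congr_right fun hlt => ?_
  rw [prefers_one, prefers_symm, iff_true_left hlt]
  exact x.not_lt_iff_lt hlt.ne

theorem kendall_finRotate_symm_consPerm (p : Fin (n + 1)) (y : Perm (Fin n)) :
    kendall (finRotate (n + 1)) (consPerm p y).symm = (n - p) + inversions y := by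
  rw [kendall, Fin.card_filter_fst_lt_snd_succ]
  congr 1
  · simp only [not_prefers_finRotate_zero, false_iff, not_not, prefers_symm, consPerm_zero,
      consPerm_succ]
    rw [card_filter_equiv_apply y (fun c => p < p.succAbove c), Fin.card_filter_lt_succAbove]
  · rw [inversions]
    congr 1
    refine filter_congr fun q _ => and_congr_right fun hlt => ?_
    rw [prefers_finRotate_succ, prefers_symm, iff_true_left hlt, consPerm_succ, consPerm_succ,
      Fin.succAbove_lt_succAbove_iff]
    exact y.not_lt_iff_lt hlt.ne

abbrev Pstar (n k : ℕ) : Multiset (Perm (Fin (n + 1))) :=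
  Multiset.replicate (k + 1) 1 + Multiset.replicate (k - 1) (finRotate (n + 1))

theorem kendallP_Pstar {k : ℕ} (hk : 1 ≤ k) (p : Fin (n + 1)) (y : Perm (Fin n)) :
    kendallP (Pstar n k) (consPerm p y).symm = 2 * k * inversions y + 2 * p + (k - 1) * n := by
  rw [kendallP, Multiset.map_add, Multiset.sum_add, Multiset.map_replicate, Multiset.map_replicate,
    Multiset.sum_replicate, Multiset.sum_replicate, smul_eq_mul, smul_eq_mul, kendall_one_symm,
    inversions_consPerm, kendall_finRotate_symm_consPerm]
  zify [hk, Fin.is_le p]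
  ring

section Pstar

variable {R : Type*} [CommSemiring R] {k : ℕ}

theorem sum_pow_kendallP_Pstar_of_zero_first (hk : 1 ≤ k) (φ : R) :
    ∑ W ∈ univ.filter (fun W : Perm (Fin (n + 2)) => (W.symm 0 : ℕ) = 0),
        φ ^ kendallP (Pstar (n + 1) k) W
      = (∑ t ∈ range (n + 1), φ ^ (2 * k * t))
          * (φ ^ ((k - 1) * (n + 1)) * mahonian n (φ ^ (2 * k))) := by
  rw [sum_filter_symm_zero_eq_zero]
  simp_rw [kendallP_Pstar hk, mul_left_comm _ (φ ^ _), pow_mul φ (2 * k), ← mahonian_succ,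
    mahonian, mul_sum, ← pow_mul, ← pow_add]
  refine sum_congr rfl fun y _ => congrArg _ ?_
  simp only [Fin.val_zero]
  ring

theorem sum_pow_kendallP_Pstar_of_one_first (hk : 1 ≤ k) (φ : R) :
    ∑ W ∈ univ.filter (fun W : Perm (Fin (n + 2)) => (W.symm 1 : ℕ) = 0),
        φ ^ kendallP (Pstar (n + 1) k) W
      = φ ^ 2 * (∑ t ∈ range (n + 1), φ ^ (2 * t))
          * (φ ^ ((k - 1) * (n + 1)) * mahonian n (φ ^ (2 * k))) := by
  rw [sum_filter_symm_one_eq_zero, ← Fin.sum_univ_eq_sum_range, mul_sum, sum_mul]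
  refine sum_congr rfl fun t _ => ?_
  simp_rw [kendallP_Pstar hk, inversions_consPerm, mahonian, mul_sum, ← pow_mul, ← pow_add]
  refine sum_congr rfl fun y _ => congrArg _ ?_
  simp only [Fin.val_zero, Fin.val_succ]
  ring

end Pstar

theorem ratio_Pstar_general (m k : ℕ) (hk : 1 ≤ k) (φ : ℝ) (hφ0 : 0 < φ) :
    (∑ V ∈ Finset.univ.filter (fun V : Equiv.Perm (Fin (m + 3)) => (V.symm 0 : ℕ) = 0),
        φ ^ kendallP (Multiset.replicate (k + 1) 1
          + Multiset.replicate (k - 1) (finRotate (m + 3))) V)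
      / (∑ V ∈ Finset.univ.filter (fun V : Equiv.Perm (Fin (m + 3)) => (V.symm 1 : ℕ) = 0),
          φ ^ kendallP (Multiset.replicate (k + 1) 1
            + Multiset.replicate (k - 1) (finRotate (m + 3))) V)
      = ((∑ t ∈ Finset.range (m + 2), φ ^ (2 * k * t))
          / (∑ t ∈ Finset.range (m + 2), φ ^ (2 * t))) * (1 / φ ^ 2) := by
  rw [sum_pow_kendallP_Pstar_of_zero_first hk, sum_pow_kendallP_Pstar_of_one_first hk]
  have hM := (mahonian_pos (m + 1) (pow_pos hφ0 (2 * k))).ne'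
  have hS : 0 < ∑ t ∈ range (m + 2), φ ^ (2 * t) := sum_pos (fun _ _ => pow_pos hφ0 _) ⟨0, by simp⟩
  field_simp

/-- for the profile `P*` with `k+1` copies of `0 ≻ 1 ≻ 2 ≻ ⋯` and `k−1`
copies of `1 ≻ 2 ≻ ⋯ ≻ 0` over `m+3` alternatives (so `c = 0`, `b = 1`), the ratio of
total Mallows likelihoods of `L_c` and `L_b` equals
`[(1+φ^{2k}+⋯+φ^{2k(m'−2)}) / (1+φ²+⋯+φ^{2(m'−2)})] · (1/φ²)` where `m' = m+3`. -/
theorem ratio_Pstar (m k : ℕ) (hk : 1 ≤ k) (φ : ℝ) (hφ0 : 0 < φ) (hφ1 : φ < 1) :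
    (∑ V ∈ Finset.univ.filter (fun V : Equiv.Perm (Fin (m + 3)) => (V.symm 0 : ℕ) = 0),
        φ ^ kendallP (Multiset.replicate (k + 1) 1
          + Multiset.replicate (k - 1) (finRotate (m + 3))) V)
      / (∑ V ∈ Finset.univ.filter (fun V : Equiv.Perm (Fin (m + 3)) => (V.symm 1 : ℕ) = 0),
          φ ^ kendallP (Multiset.replicate (k + 1) 1
            + Multiset.replicate (k - 1) (finRotate (m + 3))) V)
      = ((∑ t ∈ Finset.range (m + 2), φ ^ (2 * k * t))
          / (∑ t ∈ Finset.range (m + 2), φ ^ (2 * t))) * (1 / φ ^ 2) :=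
  ratio_Pstar_general m k hk φ hφ0
end

section
/- For any φ ∈ (1/√2, 1), there exist integers m and k such that [(1+φ^{2k}+⋯+φ^{2k(m−2)}) / (1+φ²+⋯+φ^{2(m−2)})] · (1/φ²) < 1; consequently the Mallows Bayesian estimator f_B^1 fails the Condorcet criterion for such φ. -/
open Finset

/-- for any `φ ∈ (1/√2, 1)` there exist `m` and `k` with
`[(1+φ^{2k}+⋯+φ^{2k(m−2)}) / (1+φ²+⋯+φ^{2(m−2)})] · (1/φ²) < 1`
(so the Mallows Bayesian estimator fails the Condorcet criterion for such `φ`). -/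
theorem mallows_fails_condorcet_ratio (φ : ℝ) (hφ0 : 1 / Real.sqrt 2 < φ) (hφ1 : φ < 1) :
    ∃ m k : ℕ, 3 ≤ m ∧ 1 ≤ k ∧
      ((∑ t ∈ Finset.range (m - 1), φ ^ (2 * k * t))
          / (∑ t ∈ Finset.range (m - 1), φ ^ (2 * t))) * (1 / φ ^ 2) < 1 := by
  have hs2 : (0:ℝ) < Real.sqrt 2 := Real.sqrt_pos.2 (by norm_num)
  have hφpos : 0 < φ := lt_trans (by positivity) hφ0
  set a : ℝ := φ ^ 2 with ha
  have ha1 : a < 1 := by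
    have := pow_lt_one₀ (le_of_lt hφpos) hφ1 (n := 2) (by norm_num)
    simpa [ha] using this
  have ha2 : (1:ℝ)/2 < a := by
    have h1 : (1 / Real.sqrt 2) ^ 2 < φ ^ 2 := by
      apply pow_lt_pow_left₀ hφ0 (by positivity) (by norm_num)
    have h2 : (1 / Real.sqrt 2) ^ 2 = 1/2 := by
      rw [div_pow, one_pow, Real.sq_sqrt (by norm_num : (2:ℝ) ≥ 0)]
    rw [← h2]; exact h1
  have ha0 : 0 < a := by positivity
  -- choose n with a^n < (2a-1)/(2a)
  obtain ⟨n, hn⟩ := exists_pow_lt_of_lt_one (show (0:ℝ) < (2*a-1)/(2*a) from div_pos (by linarith) (by linarith)) ha1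
  -- choose k' with a^k' < 2a-1
  obtain ⟨k', hk'⟩ := exists_pow_lt_of_lt_one (show (0:ℝ) < 2*a-1 by linarith) ha1
  refine ⟨n + 3, k' + 1, by omega, by omega, ?_⟩
  set k := k' + 1 with hk
  set b : ℝ := a ^ k with hb
  have hb0 : 0 ≤ b := by positivity
  have hbk : b < 2*a - 1 := by
    calc b = a ^ k' * a := by rw [hb, hk, pow_succ]
    _ ≤ a ^ k' := by nlinarith [pow_nonneg (le_of_lt ha0) k']
    _ < 2*a - 1 := hk'
  have hb1 : b < 1 := by linarith
  have e1 : ∀ t : ℕ, φ ^ (2 * t) = a ^ t := fun t => by rw [pow_mul]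
  have e2 : ∀ t : ℕ, φ ^ (2 * k * t) = b ^ t := fun t => by
    rw [mul_assoc, pow_mul, pow_mul]
  simp only [e1, e2]
  have hm : n + 3 - 1 = n + 2 := by omega
  rw [hm]
  set D : ℝ := ∑ t ∈ Finset.range (n+2), a ^ t with hD
  set N : ℝ := ∑ t ∈ Finset.range (n+2), b ^ t with hN
  set P : ℝ := a ^ (n+2) with hP
  set Q : ℝ := b ^ (n+2) with hQ
  have h1 : D * (a - 1) = P - 1 := geom_sum_mul a (n+2)
  have h2 : N * (b - 1) = Q - 1 := geom_sum_mul b (n+2)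
  have hPn : P ≤ a ^ n := by
    rw [hP]
    exact pow_le_pow_of_le_one (le_of_lt ha0) (le_of_lt ha1) (by omega)
  have h3 : 2*a*P < 2*a - 1 := by
    have : P < (2*a-1)/(2*a) := lt_of_le_of_lt hPn hn
    have h2a : (0:ℝ) < 2*a := by linarith
    calc 2*a*P < 2*a*((2*a-1)/(2*a)) := by
          exact mul_lt_mul_of_pos_left this h2a
      _ = 2*a - 1 := by field_simp
  have hQ0 : 0 ≤ Q := by positivity
  have hDpos : 0 < D := by nlinarith [pow_nonneg (le_of_lt ha0) (n+2)]
  have hDa : 0 < D * a := by positivity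
  rw [div_mul_div_comm, mul_one, div_lt_one hDa]
  -- key: (1-Q)*(1-a) < a*(1-P)*(1-b)
  have key : (1 - Q) * (1 - a) < a * (1 - P) * (1 - b) := by
    have hP1 : 2*(1-a) < 1 - b := by linarith
    have hP2 : (1:ℝ)/2 < a * (1 - P) := by nlinarith
    nlinarith [mul_nonneg (show (0:ℝ) ≤ 1 - a by linarith) hQ0]
  have hfac : 0 < (1 - b) * (1 - a) := by nlinarith
  have := key
  have hNe : N * ((1 - b) * (1 - a)) = (1 - Q) * (1 - a) := by linear_combination (a - 1) * h2
  have hDe : (D * a) * ((1 - b) * (1 - a)) = a * (1 - P) * (1 - b) := by linear_combination (a * (b - 1)) * h1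
  have : N * ((1 - b) * (1 - a)) < (D * a) * ((1 - b) * (1 - a)) := by
    rw [hNe, hDe]; exact key
  exact lt_of_mul_lt_mul_right this (le_of_lt hfac)
end

section
/- Let k ≥ 2, φ ∈ (0,1). Then there exists m such that ((1+φ^{2k})/(1+φ²))^{m−2} · (1+φ^{−2})/(1+φ²) < 1; consequently the Condorcet-model Bayesian estimator f_B^2 fails the Condorcet criterion. -/
open Filter

theorem exists_pow_mul_lt_of_lt_one {r : ℝ} (hr0 : 0 ≤ r) (hr1 : r < 1) (C : ℝ) {c : ℝ}
    (hc : 0 < c) : ∃ n : ℕ, r ^ n * C < c := by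
  have hlim : Tendsto (fun n : ℕ => r ^ n * C) atTop (nhds 0) := by
    simpa using (tendsto_pow_atTop_nhds_zero_of_lt_one hr0 hr1).mul_const C
  exact (hlim.eventually (gt_mem_nhds hc)).exists

theorem one_add_pow_div_one_add_pow_lt_one {φ : ℝ} (hφ0 : 0 < φ) (hφ1 : φ < 1) {i j : ℕ}
    (hij : i < j) : (1 + φ ^ j) / (1 + φ ^ i) < 1 := by
  rw [div_lt_one (by positivity)]
  linarith [pow_lt_pow_right_of_lt_one₀ hφ0 hφ1 hij]

/-- for `k ≥ 2` and `φ ∈ (0,1)`, there exists `m` with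
`((1+φ^{2k})/(1+φ²))^{m−2} · (1+φ^{−2})/(1+φ²) < 1`
(so the Condorcet-model Bayesian estimator fails the Condorcet criterion). -/
theorem condorcet_fails_condorcet_ratio (k : ℕ) (hk : 2 ≤ k) (φ : ℝ)
    (hφ0 : 0 < φ) (hφ1 : φ < 1) :
    ∃ m : ℕ, ((1 + φ ^ (2 * k)) / (1 + φ ^ 2)) ^ (m - 2)
        * ((1 + φ ^ (-2 : ℤ)) / (1 + φ ^ 2)) < 1 := by
  have hratio : (1 + φ ^ (2 * k)) / (1 + φ ^ 2) < 1 :=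
    one_add_pow_div_one_add_pow_lt_one hφ0 hφ1 (by omega)
  obtain ⟨n, hn⟩ := exists_pow_mul_lt_of_lt_one (by positivity) hratio
    ((1 + φ ^ (-2 : ℤ)) / (1 + φ ^ 2)) one_pos
  exact ⟨n + 2, by simpa using hn⟩
end
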